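/- arXiv:1112.1191 — 11 statements merged into one kernel-verified Lean document; each statement's English description precedes it below -/
import Mathlib

section
/- Let X be a continuum (compact connected metrizable space) that is not homeomorphic to the circle. If J₁ and J₂ are free intervals of X that are not disjoint, then J₁ ∪ J₂ is again a free interval of X. -/
/-!
Write `J₁ = f(ℝ)` and `J₂ = g(ℝ)` for open embeddings `f, g : ℝ → X`, and let `m = f⁻¹ ∘ g` be
the transition map on `A = g⁻¹(J₁)`. Since `X` is Hausdorff, `m` has no finite limit at a point
outside `A`; being monotone on every interval contained in `A`, it runs off to `±∞` at each
finite endpoint of such an interval. An interval of `A` with two finite endpoints is therefore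
mapped onto `ℝ`, and `J₁ ⊆ J₂`. Otherwise the complement of `A` is an interval, so `A` is a ray
or the complement of a compact interval. If `A` is a ray, an end of `J₂` overlaps an end of `J₁`
and the two charts glue to a single chart of `J₁ ∪ J₂`. If `A` has two components, the remaining
ends close up into an injective loop; its image is compact and open, hence all of the connected
space `X`, which is then a circle.
-/

/-- A free interval of `X`: an open subset homeomorphic to an open interval of ℝ
(equivalently, to ℝ itself). -/
def IsFreeInterval {X : Type*} [TopologicalSpace X] (J : Set X) : Prop :=
  IsOpen J ∧ Nonempty (↥J ≃ₜ ℝ)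

open Set Filter Function Topology

lemma isFreeInterval_iff_exists_isOpenEmbedding {X : Type*} [TopologicalSpace X] {J : Set X} :
    IsFreeInterval J ↔ ∃ f : ℝ → X, IsOpenEmbedding f ∧ range f = J := by
  constructor
  · rintro ⟨hJ, ⟨e⟩⟩
    refine ⟨(↑) ∘ e.symm, hJ.isOpenEmbedding_subtypeVal.comp e.symm.isOpenEmbedding, ?_⟩
    rw [range_comp, e.symm.range_coe, image_univ, Subtype.range_coe]
  · rintro ⟨f, hf, rfl⟩
    exact ⟨hf.isOpen_range, ⟨hf.isEmbedding.toHomeomorph.symm⟩⟩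

section Order

variable {α : Type*} [ConditionallyCompleteLinearOrder α] [TopologicalSpace α] [OrderTopology α]

theorem ContinuousOn.strictMonoOn_or_strictAntiOn [DenselyOrdered α] {δ : Type*} [LinearOrder δ]
    [TopologicalSpace δ] [OrderClosedTopology δ] {s : Set α} [s.OrdConnected] {m : α → δ}
    (hc : ContinuousOn m s) (hi : InjOn m s) : StrictMonoOn m s ∨ StrictAntiOn m s := by
  rcases s.eq_empty_or_nonempty with rfl | ⟨x, hx⟩
  · exact Or.inl fun _ h => h.elim
  have : Inhabited s := ⟨⟨x, hx⟩⟩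
  exact (Continuous.strictMono_of_inj hc.domRestrict hi.injective).imp
    strictMono_domRestrict.mp strictAntiOn_iff_strictAnti.mpr

lemma IsClosed.exists_Ioo_subset_compl_of_mem_Ioo {S : Set α} (hS : IsClosed S) {p q t : α}
    (hp : p ∈ S) (hq : q ∈ S) (ht : t ∉ S) (htpq : t ∈ Ioo p q) :
    ∃ a ∈ S, ∃ b ∈ S, a < b ∧ Ioo a b ⊆ Sᶜ := by
  have hbdd : BddAbove (S ∩ Iic t) := ⟨t, fun _ h => h.2⟩
  have hbdd' : BddBelow (S ∩ Ici t) := ⟨t, fun _ h => h.2⟩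
  obtain ⟨haS, hat⟩ := (hS.inter isClosed_Iic).csSup_mem ⟨p, hp, htpq.1.le⟩ hbdd
  obtain ⟨hbS, htb⟩ := (hS.inter isClosed_Ici).csInf_mem ⟨q, hq, htpq.2.le⟩ hbdd'
  refine ⟨_, haS, _, hbS, (hat.lt_of_ne ?_).trans (htb.lt_of_ne ?_), fun s hs hsS => ?_⟩
  · exact fun h => ht (h ▸ haS)
  · exact fun h => ht (h ▸ hbS)
  rcases le_total s t with hst | hts
  · exact (le_csSup hbdd ⟨hsS, hst⟩).not_gt hs.1
  · exact (csInf_le hbdd' ⟨hsS, hts⟩).not_gt hs.2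

lemma IsOpen.eq_Iio_or_eq_Ioi_or_eq_Iio_union_Ioi [DenselyOrdered α] {A : Set α}
    (hA : IsOpen A) (hc : Aᶜ.OrdConnected) (hne : A.Nonempty) (hne' : Aᶜ.Nonempty) :
    (∃ b, A = Iio b) ∨ (∃ a, A = Ioi a) ∨ ∃ b a, b ≤ a ∧ A = Iio b ∪ Ioi a := by
  have hcl : IsClosed Aᶜ := hA.isClosed_compl
  have hpc : IsPreconnected Aᶜ := hc.isPreconnected
  by_cases hbb : BddBelow Aᶜ <;> by_cases hba : BddAbove Aᶜ
  · refine Or.inr (Or.inr ⟨_, _, csInf_le_csSup hne' hbb hba, compl_injective ?_⟩)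
    rw [compl_union, compl_Iio, compl_Ioi, Ici_inter_Iic]
    exact eq_Icc_csInf_csSup_of_connected_bdd_closed ⟨hne', hpc⟩ hbb hba hcl
  · refine Or.inl ⟨sInf Aᶜ, compl_injective ?_⟩
    rw [compl_Iio]
    refine Subset.antisymm (fun x hx => csInf_le hbb hx) fun x hx => ?_
    rcases (mem_Ici.1 hx).eq_or_lt with rfl | hx
    · exact hcl.csInf_mem hne' hbb
    · exact hpc.Ioi_csInf_subset hbb hba hx
  · refine Or.inr (Or.inl ⟨sSup Aᶜ, compl_injective ?_⟩)
    rw [compl_Ioi]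
    refine Subset.antisymm (fun x hx => le_csSup hba hx) fun x hx => ?_
    rcases (mem_Iic.1 hx).eq_or_lt with rfl | hx
    · exact hcl.csSup_mem hne' hba
    · exact hpc.Iio_csSup_subset hbb hba hx
  · obtain ⟨x, hx⟩ := hne
    exact (eq_univ_iff_forall.1 (hpc.eq_univ_of_unbounded hbb hba) x hx).elim

end Order

section Transition

variable {X : Type*} {f g : ℝ → X} {m : ℝ → ℝ} {S : Set ℝ}

lemma injOn_of_comp_eq (hg : Injective g) (hm : ∀ u ∈ S, f (m u) = g u) : InjOn m S :=
  fun u hu v hv h => hg (by rw [← hm u hu, ← hm v hv, h])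

lemma image_Ioi_subset_Iio (hg : Injective g) {a b d : ℝ} (hba : b ≤ a)
    (hmb : ∀ u < b, f (m u) = g u) (hma : ∀ u > a, f (m u) = g u) (himg : m '' Iio b = Ioi d)
    (hd : f d ∉ range g) : m '' Ioi a ⊆ Iio d := by
  rintro _ ⟨u, hu, rfl⟩
  rcases lt_trichotomy (m u) d with h | h | h
  · exact h
  · exact (hd ⟨u, by rw [← hma u hu, h]⟩).elim
  · obtain ⟨v, hv, hvu⟩ : m u ∈ m '' Iio b := himg ▸ h
    have hvu' : v = u := hg (by rw [← hmb v hv, ← hma u hu, hvu])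
    exact (((hvu' ▸ hv : u < b).trans_le hba).not_gt hu).elim

variable [TopologicalSpace X]

lemma continuousOn_of_comp_eq (hf : IsEmbedding f) (hg : Continuous g)
    (hm : ∀ u ∈ S, f (m u) = g u) : ContinuousOn m S :=
  hf.isInducing.continuousOn_iff.2 (hg.continuousOn.congr fun u hu => hm u hu)

lemma exists_reparam_strictMonoOn (hf : IsOpenEmbedding f) (hg : IsOpenEmbedding g)
    [S.OrdConnected] (hS : S ⊆ g ⁻¹' range f) :
    ∃ f' : ℝ → X, IsOpenEmbedding f' ∧ range f' = range f ∧
      ∃ m : ℝ → ℝ, StrictMonoOn m S ∧ ∀ u ∈ g ⁻¹' range f, f' (m u) = g u := by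
  have hm : ∀ u ∈ g ⁻¹' range f, f (invFun f (g u)) = g u := fun u hu => invFun_eq hu
  have hmS : ∀ u ∈ S, f (invFun f (g u)) = g u := fun u hu => hm u (hS hu)
  rcases (continuousOn_of_comp_eq hf.isEmbedding hg.continuous hmS).strictMonoOn_or_strictAntiOn
    (injOn_of_comp_eq hg.injective hmS) with h | h
  · exact ⟨f, hf, rfl, _, h, hm⟩
  · exact ⟨f ∘ Neg.neg, hf.comp (Homeomorph.neg ℝ).isOpenEmbedding, neg_surjective.range_comp f,
      _, h.neg, fun u hu => by simpa using hm u hu⟩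

variable [T2Space X]

lemma not_tendsto_of_comp_eq (hf : Continuous f) (hg : Continuous g) {l : Filter ℝ} [l.NeBot]
    {t : ℝ} (hl : l ≤ 𝓝 t) (hm : ∀ᶠ u in l, f (m u) = g u) (ht : g t ∉ range f) (L : ℝ) :
    ¬Tendsto m l (𝓝 L) := fun hL =>
  ht ⟨L, tendsto_nhds_unique (((hf.tendsto L).comp hL).congr' hm)
    (hg.continuousAt.tendsto.mono_left hl)⟩

lemma not_bddAbove_image_of_monotoneOn (hf : Continuous f) (hg : Continuous g) {s b : ℝ}
    (hsb : s < b) (hS : Ioo s b ⊆ S) (hm : ∀ u ∈ S, f (m u) = g u) (hb : g b ∉ range f)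
    (hmono : MonotoneOn m S) : ¬BddAbove (m '' S) := fun hbdd =>
  not_tendsto_of_comp_eq hf hg nhdsWithin_le_nhds
    (eventually_of_mem (Ioo_mem_nhdsLT hsb) fun u hu => hm u (hS hu)) hb _
    ((hmono.mono hS).tendsto_nhdsWithin_Ioo_left (nonempty_Ioo.2 hsb)
      (hbdd.mono (image_mono hS)))

lemma not_bddBelow_image_of_monotoneOn (hf : Continuous f) (hg : Continuous g) {a s : ℝ}
    (has : a < s) (hS : Ioo a s ⊆ S) (hm : ∀ u ∈ S, f (m u) = g u) (ha : g a ∉ range f)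
    (hmono : MonotoneOn m S) : ¬BddBelow (m '' S) := fun hbdd =>
  not_tendsto_of_comp_eq hf hg nhdsWithin_le_nhds
    (eventually_of_mem (Ioo_mem_nhdsGT has) fun u hu => hm u (hS hu)) ha _
    ((hmono.mono hS).tendsto_nhdsWithin_Ioo_right (nonempty_Ioo.2 has)
      (hbdd.mono (image_mono hS)))

lemma not_bddBelow_image_of_antitoneOn (hf : Continuous f) (hg : Continuous g) {s b : ℝ}
    (hsb : s < b) (hS : Ioo s b ⊆ S) (hm : ∀ u ∈ S, f (m u) = g u) (hb : g b ∉ range f)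
    (hanti : AntitoneOn m S) : ¬BddBelow (m '' S) := fun hbdd =>
  not_tendsto_of_comp_eq hf hg nhdsWithin_le_nhds
    (eventually_of_mem (Ioo_mem_nhdsLT hsb) fun u hu => hm u (hS hu)) hb _
    ((hanti.mono hS).tendsto_nhdsWithin_Ioo_left (nonempty_Ioo.2 hsb)
      (hbdd.mono (image_mono hS)))

lemma not_bddAbove_image_of_antitoneOn (hf : Continuous f) (hg : Continuous g) {a s : ℝ}
    (has : a < s) (hS : Ioo a s ⊆ S) (hm : ∀ u ∈ S, f (m u) = g u) (ha : g a ∉ range f)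
    (hanti : AntitoneOn m S) : ¬BddAbove (m '' S) := fun hbdd =>
  not_tendsto_of_comp_eq hf hg nhdsWithin_le_nhds
    (eventually_of_mem (Ioo_mem_nhdsGT has) fun u hu => hm u (hS hu)) ha _
    ((hanti.mono hS).tendsto_nhdsWithin_Ioo_right (nonempty_Ioo.2 has)
      (hbdd.mono (image_mono hS)))

lemma range_subset_range_of_Ioo_subset (hf : IsOpenEmbedding f) (hg : IsOpenEmbedding g)
    {a b : ℝ} (hab : a < b) (hsub : Ioo a b ⊆ g ⁻¹' range f) (ha : g a ∉ range f)
    (hb : g b ∉ range f) : range f ⊆ range g := by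
  set τ : ℝ → ℝ := fun u => invFun f (g u)
  have hm : ∀ u ∈ Ioo a b, f (τ u) = g u := fun u hu => invFun_eq (hsub hu)
  have hcont := continuousOn_of_comp_eq hf.isEmbedding hg.continuous hm
  have hc := hf.continuous
  have hc' := hg.continuous
  have hunb : ¬BddBelow (τ '' Ioo a b) ∧ ¬BddAbove (τ '' Ioo a b) := by
    rcases hcont.strictMonoOn_or_strictAntiOn (injOn_of_comp_eq hg.injective hm) with h | h
    · exact ⟨not_bddBelow_image_of_monotoneOn hc hc' hab subset_rfl hm ha h.monotoneOn,
        not_bddAbove_image_of_monotoneOn hc hc' hab subset_rfl hm hb h.monotoneOn⟩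
    · exact ⟨not_bddBelow_image_of_antitoneOn hc hc' hab subset_rfl hm hb h.antitoneOn,
        not_bddAbove_image_of_antitoneOn hc hc' hab subset_rfl hm ha h.antitoneOn⟩
  rintro _ ⟨y, rfl⟩
  obtain ⟨u, hu, rfl⟩ : y ∈ τ '' Ioo a b := by
    rw [(isPreconnected_Ioo.image τ hcont).eq_univ_of_unbounded hunb.1 hunb.2]
    exact mem_univ y
  exact ⟨u, (hm u hu).symm⟩

lemma ordConnected_compl_preimage_range (hf : IsOpenEmbedding f) (hg : IsOpenEmbedding g)
    (hfg : ¬range f ⊆ range g) : (g ⁻¹' range f)ᶜ.OrdConnected := by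
  refine ⟨fun p hp q hq t ht htA => hfg ?_⟩
  have hpt : p < t := ht.1.lt_of_ne fun h => hp (h ▸ htA)
  have htq : t < q := ht.2.lt_of_ne fun h => hq (h ▸ htA)
  obtain ⟨a, ha, b, hb, hab, hsub⟩ :=
    (hf.isOpen_range.preimage hg.continuous).isClosed_compl.exists_Ioo_subset_compl_of_mem_Ioo
      hp hq (not_not.2 htA) ⟨hpt, htq⟩
  exact range_subset_range_of_Ioo_subset hf hg hab (fun u hu => not_not.1 (hsub hu)) ha hb

end Transition

section Rays

variable {X : Type*} [TopologicalSpace X] {f g : ℝ → X} {m : ℝ → ℝ}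

lemma notMem_range_of_tendsto_atBot (hg : IsInducing g) {x : X} (h : Tendsto g atBot (𝓝 x)) :
    x ∉ range g := by
  rintro ⟨v, rfl⟩
  exact not_tendsto_nhds_of_tendsto_atBot tendsto_id v ((hg.tendsto_nhds_iff (f := id)).2 h)

lemma tendsto_atBot_of_image_Iio_eq_Ioi (hf : Continuous f) {b d : ℝ}
    (hm : ∀ u < b, f (m u) = g u) (hmono : StrictMonoOn m (Iio b)) (himg : m '' Iio b = Ioi d) :
    Tendsto g atBot (𝓝 (f d)) := by
  have hlim : Tendsto m atBot (𝓝 d) := by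
    refine tendsto_order.2 ⟨fun y hy => ?_, fun y hy => ?_⟩
    · filter_upwards [eventually_lt_atBot b] with u hu
      exact hy.trans (himg ▸ mem_image_of_mem m hu : m u ∈ Ioi d)
    · obtain ⟨v, hv, rfl⟩ : y ∈ m '' Iio b := himg ▸ hy
      filter_upwards [eventually_lt_atBot v] with u hu
      exact hmono (hu.trans hv) hv hu
  exact ((hf.tendsto d).comp hlim).congr'
    (by filter_upwards [eventually_lt_atBot b] with u hu using hm u hu)

variable [T2Space X]

lemma exists_image_Iio_eq_Ioi (hf : IsOpenEmbedding f) (hg : IsOpenEmbedding g) {b : ℝ}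
    (hm : ∀ u < b, f (m u) = g u) (hb : g b ∉ range f) (hmono : StrictMonoOn m (Iio b))
    (hfg : ¬range f ⊆ range g) : ∃ d, m '' Iio b = Ioi d := by
  have hpc := isPreconnected_Iio.image m (continuousOn_of_comp_eq hf.isEmbedding hg.continuous hm)
  have hunb : ¬BddAbove (m '' Iio b) := not_bddAbove_image_of_monotoneOn hf.continuous
    hg.continuous (sub_one_lt b) Ioo_subset_Iio_self hm hb hmono.monotoneOn
  have hbdd : BddBelow (m '' Iio b) := by
    by_contra hbdd
    refine hfg ?_
    rintro _ ⟨y, rfl⟩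
    obtain ⟨u, hu, rfl⟩ := (hpc.eq_univ_of_unbounded hbdd hunb).symm ▸ mem_univ y
    exact ⟨u, (hm u hu).symm⟩
  refine ⟨sInf (m '' Iio b), Subset.antisymm ?_ (hpc.Ioi_csInf_subset hbdd hunb)⟩
  rintro _ ⟨u, hu, rfl⟩
  have hu' : u - 1 ∈ Iio b := (sub_one_lt u).trans hu
  exact (csInf_le hbdd (mem_image_of_mem m hu')).trans_lt (hmono hu' hu (sub_one_lt u))

lemma strictMonoOn_Ioi_of_bddAbove (hf : IsOpenEmbedding f) (hg : IsOpenEmbedding g) {a : ℝ}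
    (hm : ∀ u > a, f (m u) = g u) (ha : g a ∉ range f) (hbdd : BddAbove (m '' Ioi a)) :
    StrictMonoOn m (Ioi a) :=
  ((continuousOn_of_comp_eq (S := Ioi a) hf.isEmbedding hg.continuous hm
    ).strictMonoOn_or_strictAntiOn (injOn_of_comp_eq hg.injective hm)).resolve_right fun h =>
      not_bddAbove_image_of_antitoneOn hf.continuous hg.continuous (lt_add_one a)
        Ioo_subset_Ioi_self hm ha h.antitoneOn hbdd

lemma tendsto_atBot_of_strictMonoOn_Ioi (hf : IsOpenEmbedding f) (hg : IsOpenEmbedding g)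
    {a : ℝ} (hm : ∀ u > a, f (m u) = g u) (hmono : StrictMonoOn m (Ioi a))
    (ha : g a ∉ range f) : Tendsto f atBot (𝓝 (g a)) := by
  have hpc := isPreconnected_Ioi.image m (continuousOn_of_comp_eq hf.isEmbedding hg.continuous hm)
  have hunb : ¬BddBelow (m '' Ioi a) := not_bddBelow_image_of_monotoneOn hf.continuous
    hg.continuous (lt_add_one a) Ioo_subset_Ioi_self hm ha hmono.monotoneOn
  refine fun V hV => mem_map.2 ?_
  obtain ⟨w, haw, hw⟩ := exists_Ico_subset_of_mem_nhds
    (hg.continuous.continuousAt.preimage_mem_nhds hV) ⟨a + 1, lt_add_one a⟩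
  filter_upwards [Iio_mem_atBot (m w)] with y hy
  obtain ⟨_, ⟨v, hv, rfl⟩, hvy⟩ := not_bddBelow_iff.1 hunb y
  obtain ⟨s, hs, rfl⟩ :=
    hpc.Icc_subset (mem_image_of_mem m hv) (mem_image_of_mem m haw) ⟨hvy.le, le_of_lt hy⟩
  rw [mem_preimage, hm s hs]
  exact hw ⟨le_of_lt hs, (hmono.lt_iff_lt hs haw).1 hy⟩

end Rays

section Line

variable {X : Type*} [TopologicalSpace X]

lemma isFreeInterval_image_Iic_union_image_Ioi {p q : ℝ → X} (hp : IsOpenEmbedding p)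
    (hq : IsOpenEmbedding q) {u : ℝ} (hpq : p u = q u) (hdisj : ∀ t ≤ u, ∀ s > u, p t ≠ q s)
    (hloc : map q (𝓝[≤] u) ≤ map p (𝓝[≤] u)) : IsFreeInterval (p '' Iic u ∪ q '' Ioi u) := by
  set h : ℝ → X := fun t => if t ≤ u then p t else q t
  have hle : ∀ t ≤ u, h t = p t := fun t ht => if_pos ht
  have hge : ∀ t, u ≤ t → h t = q t := fun t ht =>
    ht.eq_or_lt.elim (fun e => e ▸ (if_pos le_rfl).trans hpq) fun ht => if_neg ht.not_ge
  have hcont : Continuous h := Continuous.if_le hp.continuous hq.continuous continuous_id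
    continuous_const fun t ht => ht ▸ hpq
  have hinj : Injective h := by
    intro t s hts
    rcases le_or_gt t u with ht | ht <;> rcases le_or_gt s u with hs | hs
    · exact hp.injective (by rwa [hle t ht, hle s hs] at hts)
    · exact (hdisj t ht s hs (by rwa [hle t ht, hge s hs.le] at hts)).elim
    · exact (hdisj s hs t ht (by rw [hge t ht.le, hle s hs] at hts; exact hts.symm)).elim
    · exact hq.injective (by rwa [hge t ht.le, hge s hs.le] at hts)
  have hopen : IsOpenMap h := by
    refine isOpenMap_iff_nhds_le.2 fun t => ?_
    rcases lt_trichotomy t u with htu | rfl | htu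
    · have : h =ᶠ[𝓝 t] p := eventually_of_mem (Iio_mem_nhds htu) fun s hs => hle s hs.le
      rw [map_congr this, hp.map_nhds_eq, this.eq_of_nhds]
    · have hL : h =ᶠ[𝓝[≤] t] p := eventually_of_mem self_mem_nhdsWithin hle
      have hR : h =ᶠ[𝓝[≥] t] q := eventually_of_mem self_mem_nhdsWithin hge
      calc 𝓝 (h t) = map q (𝓝[≤] t) ⊔ map q (𝓝[≥] t) := by
            rw [← Filter.map_sup, nhdsLE_sup_nhdsGE, hq.map_nhds_eq, hge t le_rfl]
        _ ≤ map p (𝓝[≤] t) ⊔ map q (𝓝[≥] t) := sup_le_sup_right hloc _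
        _ = map h (𝓝 t) := by
            rw [← map_congr hL, ← map_congr hR, ← Filter.map_sup, nhdsLE_sup_nhdsGE]
    · have : h =ᶠ[𝓝 t] q := eventually_of_mem (Ioi_mem_nhds htu) fun s hs => hge s hs.le
      rw [map_congr this, hq.map_nhds_eq, this.eq_of_nhds]
  refine isFreeInterval_iff_exists_isOpenEmbedding.2
    ⟨h, .of_continuous_injective_isOpenMap hcont hinj hopen, Subset.antisymm ?_ ?_⟩
  · rintro _ ⟨t, rfl⟩
    rcases le_or_gt t u with ht | ht
    · exact Or.inl ⟨t, ht, (hle t ht).symm⟩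
    · exact Or.inr ⟨t, ht, (hge t ht.le).symm⟩
  · rintro _ (⟨t, ht, rfl⟩ | ⟨t, ht, rfl⟩)
    · exact ⟨t, hle t ht⟩
    · exact ⟨t, hge t (le_of_lt ht)⟩

variable [T2Space X] {f g : ℝ → X} {m : ℝ → ℝ}

lemma isFreeInterval_union_of_strictMonoOn_Iio (hf : IsOpenEmbedding f) (hg : IsOpenEmbedding g)
    {b u : ℝ} (hA : g ⁻¹' range f = Iio b) (hm : ∀ s < b, f (m s) = g s)
    (hmono : StrictMonoOn m (Iio b)) (hu : u < b) (hmu : m u = u) :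
    IsFreeInterval (range f ∪ range g) := by
  have hb : g b ∉ range f := fun h => lt_irrefl b (hA ▸ h : b ∈ Iio b)
  have hcont := continuousOn_of_comp_eq hf.isEmbedding hg.continuous hm
  have hsurj : Ioi u ⊆ m '' Iio b := by
    intro y hy
    obtain ⟨_, ⟨v, hv, rfl⟩, hyv⟩ := not_bddAbove_iff.1 (not_bddAbove_image_of_monotoneOn
      hf.continuous hg.continuous hu Ioo_subset_Iio_self hm hb hmono.monotoneOn) y
    exact (isPreconnected_Iio.image m hcont).Icc_subset (hmu ▸ mem_image_of_mem m hu)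
      (mem_image_of_mem m hv) ⟨le_of_lt hy, hyv.le⟩
  have hrange : f '' Iic u ∪ g '' Ioi u = range f ∪ range g := by
    refine Subset.antisymm (union_subset_union (image_subset_range f _)
      (image_subset_range g _)) ?_
    rintro _ (⟨y, rfl⟩ | ⟨s, rfl⟩)
    · rcases le_or_gt y u with hy | hy
      · exact Or.inl ⟨y, hy, rfl⟩
      · obtain ⟨s, hs, rfl⟩ := hsurj hy
        exact Or.inr ⟨s, (hmono.lt_iff_lt hu hs).1 (hmu.symm ▸ hy), (hm s hs).symm⟩
    · rcases le_or_gt s u with hs | hs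
      · have hsb : s < b := hs.trans_lt hu
        exact Or.inl ⟨m s, hmu ▸ hmono.monotoneOn hsb hu hs, hm s hsb⟩
      · exact Or.inr ⟨s, hs, rfl⟩
  rw [← hrange]
  refine isFreeInterval_image_Iic_union_image_Ioi hf hg (by rw [← hm u hu, hmu]) ?_ ?_
  · intro t ht s hs hts
    have hsb : s ∈ g ⁻¹' range f := ⟨t, hts⟩
    rw [hA] at hsb
    have hts' : t = m s := hf.injective (hts.trans (hm s hsb).symm)
    exact (hmono hu hsb hs).not_ge (by rw [hmu, ← hts']; exact ht)
  · have hr : Tendsto m (𝓝[≤] u) (𝓝[≤] u) := by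
      refine tendsto_nhdsWithin_iff.2 ⟨?_, ?_⟩
      · simpa [hmu] using
          (hcont.continuousAt (Iio_mem_nhds hu)).tendsto.mono_left nhdsWithin_le_nhds
      · filter_upwards [self_mem_nhdsWithin] with s hs
        exact hmu ▸ hmono.monotoneOn (lt_of_le_of_lt hs hu) hu hs
    have hgf : g =ᶠ[𝓝[≤] u] f ∘ m := eventually_of_mem
      (mem_nhdsWithin_of_mem_nhds (Iio_mem_nhds hu)) fun s hs => (hm s hs).symm
    rw [map_congr hgf, ← map_map]
    exact map_mono hr

lemma isFreeInterval_union_of_preimage_eq_Iio (hf : IsOpenEmbedding f) (hg : IsOpenEmbedding g)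
    {b : ℝ} (hA : g ⁻¹' range f = Iio b) : IsFreeInterval (range f ∪ range g) := by
  obtain ⟨f', hf', hr, m, hmono, hm⟩ := exists_reparam_strictMonoOn hf hg hA.ge
  set k := m (b - 1) - (b - 1)
  have hmb : ∀ s < b, f' (m s - k + k) = g s := fun s hs => by
    rw [sub_add_cancel, hm s (hA.ge hs)]
  have hrk : range (f' ∘ (· + k)) = range f := ((add_right_surjective k).range_comp f').trans hr
  rw [← hrk] at hA ⊢
  exact isFreeInterval_union_of_strictMonoOn_Iio (hf'.comp (Homeomorph.addRight k).isOpenEmbedding)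
    hg hA hmb (fun s hs t ht hst => sub_lt_sub_right (hmono hs ht hst) k) (sub_one_lt b)
    (sub_sub_cancel _ _)

lemma isFreeInterval_union_of_preimage_eq_Ioi (hf : IsOpenEmbedding f) (hg : IsOpenEmbedding g)
    {a : ℝ} (hA : g ⁻¹' range f = Ioi a) : IsFreeInterval (range f ∪ range g) := by
  have hA' : (g ∘ Neg.neg) ⁻¹' range f = Iio (-a) := by
    ext u
    simp [preimage_comp, hA]
  rw [← neg_surjective.range_comp g]
  exact isFreeInterval_union_of_preimage_eq_Iio hf (hg.comp (Homeomorph.neg ℝ).isOpenEmbedding) hA'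

end Line

section Circle

variable {X : Type*}

noncomputable def rayPath (φ : ℝ → X) (a : ℝ) (x : X) (t : ℝ) : X :=
  if t ≤ 0 then x else φ (a + Real.log t)

noncomputable def rayLoop (φ : ℝ → X) (a : ℝ) (ψ : ℝ → X) (d : ℝ) (t : ℝ) : X :=
  if t ≤ 1 then rayPath φ a (ψ d) t else rayPath ψ d (φ a) (t - 1)

variable {φ ψ : ℝ → X} {a d : ℝ} {x : X}

lemma rayPath_of_nonpos {t : ℝ} (ht : t ≤ 0) : rayPath φ a x t = x := if_pos ht

lemma rayPath_of_pos {t : ℝ} (ht : 0 < t) : rayPath φ a x t = φ (a + Real.log t) :=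
  if_neg ht.not_ge

lemma rayPath_one : rayPath φ a x 1 = φ a := by
  rw [rayPath_of_pos one_pos, Real.log_one, add_zero]

lemma image_rayPath_Icc : rayPath φ a x '' Icc 0 1 = insert x (φ '' Iic a) := by
  refine Subset.antisymm ?_ ?_
  · rintro _ ⟨t, ⟨h0, h1⟩, rfl⟩
    rcases h0.eq_or_lt with rfl | hpos
    · exact Or.inl (rayPath_of_nonpos le_rfl)
    · exact Or.inr ⟨a + Real.log t, mem_Iic.2 (by linarith [Real.log_nonpos h0 h1]),
        (rayPath_of_pos hpos).symm⟩
  · rintro _ (rfl | ⟨s, hs, rfl⟩)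
    · exact ⟨0, ⟨le_rfl, zero_le_one⟩, rayPath_of_nonpos le_rfl⟩
    · refine ⟨Real.exp (s - a), ⟨(Real.exp_pos _).le, Real.exp_le_one_iff.2 ?_⟩, ?_⟩
      · linarith [mem_Iic.1 hs]
      · rw [rayPath_of_pos (Real.exp_pos _), Real.log_exp, add_sub_cancel]

lemma image_rayPath_Ioo : rayPath φ a x '' Ioo 0 1 = φ '' Iio a := by
  refine Subset.antisymm ?_ ?_
  · rintro _ ⟨t, ⟨h0, h1⟩, rfl⟩
    exact ⟨a + Real.log t, mem_Iio.2 (by linarith [Real.log_neg h0 h1]),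
      (rayPath_of_pos h0).symm⟩
  · rintro _ ⟨s, hs, rfl⟩
    refine ⟨Real.exp (s - a), ⟨Real.exp_pos _, Real.exp_lt_one_iff.2 ?_⟩, ?_⟩
    · linarith [mem_Iio.1 hs]
    · rw [rayPath_of_pos (Real.exp_pos _), Real.log_exp, add_sub_cancel]

lemma injOn_rayPath (hφ : InjOn φ (Iic a)) (hx : x ∉ φ '' Iic a) :
    InjOn (rayPath φ a x) (Icc 0 1) := by
  have hmem : ∀ t ∈ Ioc (0 : ℝ) 1, a + Real.log t ∈ Iic a := fun t ht =>
    mem_Iic.2 (by linarith [Real.log_nonpos ht.1.le ht.2])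
  intro t ht s hs hts
  rcases ht.1.eq_or_lt with rfl | htp <;> rcases hs.1.eq_or_lt with rfl | hsp
  · rfl
  · rw [rayPath_of_nonpos le_rfl, rayPath_of_pos hsp] at hts
    exact (hx ⟨_, hmem s ⟨hsp, hs.2⟩, hts.symm⟩).elim
  · rw [rayPath_of_nonpos le_rfl, rayPath_of_pos htp] at hts
    exact (hx ⟨_, hmem t ⟨htp, ht.2⟩, hts⟩).elim
  · rw [rayPath_of_pos htp, rayPath_of_pos hsp] at hts
    exact Real.log_injOn_pos htp hsp
      (add_left_cancel (hφ (hmem t ⟨htp, ht.2⟩) (hmem s ⟨hsp, hs.2⟩) hts))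

lemma rayLoop_of_le_one {t : ℝ} (ht : t ≤ 1) : rayLoop φ a ψ d t = rayPath φ a (ψ d) t :=
  if_pos ht

lemma rayLoop_of_one_lt {t : ℝ} (ht : 1 < t) :
    rayLoop φ a ψ d t = rayPath ψ d (φ a) (t - 1) :=
  if_neg ht.not_ge

lemma image_rayLoop_Icc : rayLoop φ a ψ d '' Icc 0 1 = insert (ψ d) (φ '' Iic a) :=
  (image_congr fun _ ht => rayLoop_of_le_one ht.2).trans image_rayPath_Icc

lemma image_rayLoop_Ioo : rayLoop φ a ψ d '' Ioo 1 2 = ψ '' Iio d := by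
  rw [image_congr fun _ ht => rayLoop_of_one_lt ht.1, ← image_image, image_sub_const_Ioo]
  norm_num
  exact image_rayPath_Ioo

lemma image_rayLoop_Ico : rayLoop φ a ψ d '' Ico 0 2 = φ '' Iic a ∪ ψ '' Iic d := by
  rw [← Icc_union_Ioo_eq_Ico zero_le_one one_lt_two, image_union, image_rayLoop_Icc,
    image_rayLoop_Ioo, ← Iio_insert (a := d), image_insert_eq, insert_union, union_insert]

lemma injOn_rayLoop (hφ : InjOn φ (Iic a)) (hψ : InjOn ψ (Iic d))
    (hdisj : Disjoint (φ '' Iic a) (ψ '' Iic d)) : InjOn (rayLoop φ a ψ d) (Ico 0 2) := by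
  have hψd : ψ d ∉ φ '' Iic a := hdisj.notMem_of_mem_right (mem_image_of_mem ψ self_mem_Iic)
  have hφa : φ a ∉ ψ '' Iic d := hdisj.notMem_of_mem_left (mem_image_of_mem φ self_mem_Iic)
  rw [← Icc_union_Ioo_eq_Ico zero_le_one one_lt_two,
    injOn_union (disjoint_left.2 fun t ht ht' => ht'.1.not_ge ht.2)]
  refine ⟨(injOn_rayPath hφ hψd).congr fun t ht => (rayLoop_of_le_one ht.2).symm, ?_, ?_⟩
  · intro t ht s hs hts
    rw [rayLoop_of_one_lt ht.1, rayLoop_of_one_lt hs.1] at hts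
    have hI : ∀ r ∈ Ioo (1 : ℝ) 2, r - 1 ∈ Icc 0 1 := fun r hr =>
      ⟨by linarith [hr.1], by linarith [hr.2]⟩
    exact sub_left_injective (injOn_rayPath hψ hφa (hI t ht) (hI s hs) hts)
  · intro t ht s hs hts
    have ht' : rayLoop φ a ψ d t ∈ insert (ψ d) (φ '' Iic a) :=
      image_rayLoop_Icc ▸ mem_image_of_mem _ ht
    obtain ⟨r, hr, hrs⟩ : rayLoop φ a ψ d s ∈ ψ '' Iio d :=
      image_rayLoop_Ioo ▸ mem_image_of_mem _ hs
    rcases ht' with ht' | ht'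
    · exact hr.ne (hψ (Iio_subset_Iic_self hr) self_mem_Iic (hrs.trans (hts.symm.trans ht')))
    · exact hdisj.ne_of_mem ht' ⟨r, Iio_subset_Iic_self hr, rfl⟩ (hts.trans hrs.symm)

variable [TopologicalSpace X]

lemma continuous_rayPath (hφ : Continuous φ) (hx : Tendsto φ atBot (𝓝 x)) :
    Continuous (rayPath φ a x) := by
  refine continuous_iff_continuousAt.2 fun t => ?_
  rcases lt_trichotomy t 0 with ht | rfl | ht
  · exact continuousAt_const.congr
      (eventually_of_mem (Iio_mem_nhds ht) fun s hs => (rayPath_of_nonpos hs.le).symm)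
  · refine continuousAt_iff_continuous_left'_right'.2 ⟨?_, ?_⟩
    · exact continuousWithinAt_const.congr (fun s hs => rayPath_of_nonpos (le_of_lt hs))
        (rayPath_of_nonpos le_rfl)
    · rw [ContinuousWithinAt, rayPath_of_nonpos le_rfl]
      exact (hx.comp (tendsto_atBot_add_const_left _ a Real.tendsto_log_nhdsGT_zero)).congr'
        (eventually_of_mem self_mem_nhdsWithin fun s hs => (rayPath_of_pos hs).symm)
  · exact (hφ.continuousAt.comp (continuousAt_const.add (Real.continuousAt_log ht.ne'))).congr
      (eventually_of_mem (Ioi_mem_nhds ht) fun s hs => (rayPath_of_pos hs).symm)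

lemma continuous_rayLoop (hφ : Continuous φ) (hψ : Continuous ψ)
    (hφψ : Tendsto φ atBot (𝓝 (ψ d))) (hψφ : Tendsto ψ atBot (𝓝 (φ a))) :
    Continuous (rayLoop φ a ψ d) :=
  Continuous.if_le (continuous_rayPath hφ hφψ)
    ((continuous_rayPath hψ hψφ).comp (continuous_sub_right 1)) continuous_id continuous_const
    fun t ht => by rw [ht, sub_self, rayPath_one, rayPath_of_nonpos le_rfl]

lemma exists_addCircle_of_injOn_Ico {p : ℝ} (hp : 0 < p) {F : ℝ → X} (hF : Continuous F)
    (hper : F 0 = F p) (hinj : InjOn F (Ico 0 p)) :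
    ∃ e : AddCircle (1 : ℝ) → X, Continuous e ∧ Injective e ∧ range e = F '' Ico 0 p := by
  have : Fact (0 < p) := ⟨hp⟩
  have hcoe : ∀ x : AddCircle p, ∃ t ∈ Ico 0 p, (t : AddCircle p) = x := AddCircle.eq_coe_Ico
  set e := AddCircle.liftIco p 0 F
  have he : ∀ t ∈ Ico 0 p, e t = F t := fun t ht => AddCircle.liftIco_zero_coe_apply ht
  set r := AddCircle.homeomorphAddCircle (1 : ℝ) p one_ne_zero hp.ne'
  refine ⟨e ∘ r, (AddCircle.liftIco_zero_continuous hper hF.continuousOn).comp r.continuous,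
    ?_, ?_⟩
  · refine Injective.comp (fun x y hxy => ?_) r.injective
    obtain ⟨s, hs, rfl⟩ := hcoe x
    obtain ⟨t, ht, rfl⟩ := hcoe y
    rw [he s hs, he t ht] at hxy
    rw [hinj hs ht hxy]
  · rw [range_comp, r.range_coe, image_univ]
    refine Subset.antisymm ?_ fun _ ⟨t, ht, hFt⟩ => ⟨t, (he t ht).trans hFt⟩
    rintro _ ⟨x, rfl⟩
    obtain ⟨t, ht, rfl⟩ := hcoe x
    exact ⟨t, ht, (he t ht).symm⟩

lemma exists_circle_of_rays (hφ : Continuous φ) (hψ : Continuous ψ) (hφi : InjOn φ (Iic a))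
    (hψi : InjOn ψ (Iic d)) (hdisj : Disjoint (φ '' Iic a) (ψ '' Iic d))
    (hφψ : Tendsto φ atBot (𝓝 (ψ d))) (hψφ : Tendsto ψ atBot (𝓝 (φ a))) :
    ∃ e : AddCircle (1 : ℝ) → X, Continuous e ∧ Injective e ∧
      range e = φ '' Iic a ∪ ψ '' Iic d := by
  have hper : rayLoop φ a ψ d 0 = rayLoop φ a ψ d 2 := by
    rw [rayLoop_of_le_one zero_le_one, rayLoop_of_one_lt one_lt_two, rayPath_of_nonpos le_rfl]
    norm_num [rayPath_one]
  rw [← image_rayLoop_Ico]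
  exact exists_addCircle_of_injOn_Ico two_pos (continuous_rayLoop hφ hψ hφψ hψφ) hper
    (injOn_rayLoop hφi hψi hdisj)

end Circle

section Main

variable {X : Type*} [TopologicalSpace X] [T2Space X] {f g : ℝ → X} {m : ℝ → ℝ}

lemma exists_circle_of_strictMonoOn_Iio (hf : IsOpenEmbedding f) (hg : IsOpenEmbedding g)
    {a b : ℝ} (hA : g ⁻¹' range f = Iio b ∪ Ioi a) (hba : b ≤ a)
    (hm : ∀ u ∈ g ⁻¹' range f, f (m u) = g u) (hmono : StrictMonoOn m (Iio b))
    (hfg : ¬range f ⊆ range g) :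
    ∃ e : AddCircle (1 : ℝ) → X, Continuous e ∧ Injective e ∧ range e = range f ∪ range g := by
  have hgA : ∀ {u}, g u ∈ range f → u < b ∨ a < u := fun {u} h => by
    rwa [← mem_preimage, hA] at h
  have hmb : ∀ u < b, f (m u) = g u := fun u hu => hm u (hA ▸ Or.inl hu)
  have hma : ∀ u > a, f (m u) = g u := fun u hu => hm u (hA ▸ Or.inr hu)
  have hb : g b ∉ range f := fun h => (hgA h).elim (lt_irrefl b) hba.not_gt
  have ha : g a ∉ range f := fun h => (hgA h).elim hba.not_gt (lt_irrefl a)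
  obtain ⟨d, himg⟩ := exists_image_Iio_eq_Ioi hf hg hmb hb hmono hfg
  have hlim := tendsto_atBot_of_image_Iio_eq_Ioi hf.continuous hmb hmono himg
  have hd : f d ∉ range g := notMem_range_of_tendsto_atBot hg.isInducing hlim
  have hlt : m '' Ioi a ⊆ Iio d := image_Ioi_subset_Iio hg.injective hba hmb hma himg hd
  have hmono' := strictMonoOn_Ioi_of_bddAbove hf hg hma ha (bddAbove_Iio.mono hlt)
  have hdisj : Disjoint (g '' Iic a) (f '' Iic d) := by
    refine disjoint_left.2 ?_
    rintro _ ⟨u, hu, rfl⟩ ⟨y, hy, hyu⟩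
    have hub : u < b := (hgA ⟨y, hyu⟩).resolve_right (not_lt.2 hu)
    have hym : y = m u := hf.injective (hyu.trans (hmb u hub).symm)
    have hmu : m u ∈ Ioi d := himg ▸ mem_image_of_mem m hub
    exact (mem_Iic.1 hy).not_gt (hym ▸ hmu)
  obtain ⟨e, he, heinj, hrange⟩ := exists_circle_of_rays hg.continuous hf.continuous
    hg.injective.injOn hf.injective.injOn hdisj hlim
    (tendsto_atBot_of_strictMonoOn_Ioi hf hg hma hmono' ha)
  refine ⟨e, he, heinj, hrange.trans (Subset.antisymm ?_ ?_)⟩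
  · exact union_subset ((image_subset_range _ _).trans subset_union_right)
      ((image_subset_range _ _).trans subset_union_left)
  · rintro _ (⟨y, rfl⟩ | ⟨u, rfl⟩)
    · rcases le_or_gt y d with hy | hy
      · exact Or.inr ⟨y, hy, rfl⟩
      · obtain ⟨v, hv, rfl⟩ : y ∈ m '' Iio b := himg ▸ hy
        exact Or.inl ⟨v, (le_of_lt hv).trans hba, (hmb v hv).symm⟩
    · rcases le_or_gt u a with hu | hu
      · exact Or.inl ⟨u, hu, rfl⟩
      · exact Or.inr ⟨m u, Iio_subset_Iic_self (hlt (mem_image_of_mem m hu)), hma u hu⟩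

lemma exists_circle_of_preimage_eq_Iio_union_Ioi (hf : IsOpenEmbedding f)
    (hg : IsOpenEmbedding g) {a b : ℝ} (hA : g ⁻¹' range f = Iio b ∪ Ioi a) (hba : b ≤ a)
    (hfg : ¬range f ⊆ range g) :
    ∃ e : AddCircle (1 : ℝ) → X, Continuous e ∧ Injective e ∧ range e = range f ∪ range g := by
  obtain ⟨f', hf', hr, m, hmono, hm⟩ :=
    exists_reparam_strictMonoOn hf hg (S := Iio b) (hA ▸ subset_union_left)
  rw [← hr] at hA hm hfg ⊢
  exact exists_circle_of_strictMonoOn_Iio hf' hg hA hba hm hmono hfg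

theorem isFreeInterval_union_or_exists_circle (hf : IsOpenEmbedding f) (hg : IsOpenEmbedding g)
    (hmeet : (range f ∩ range g).Nonempty) :
    IsFreeInterval (range f ∪ range g) ∨
      ∃ e : AddCircle (1 : ℝ) → X, Continuous e ∧ Injective e ∧ range e = range f ∪ range g := by
  by_cases hfg : range f ⊆ range g
  · rw [union_eq_self_of_subset_left hfg]
    exact Or.inl (isFreeInterval_iff_exists_isOpenEmbedding.2 ⟨g, hg, rfl⟩)
  by_cases hgf : range g ⊆ range f
  · rw [union_eq_self_of_subset_right hgf]
    exact Or.inl (isFreeInterval_iff_exists_isOpenEmbedding.2 ⟨f, hf, rfl⟩)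
  have hne : (g ⁻¹' range f).Nonempty := by
    obtain ⟨_, hx, u, rfl⟩ := hmeet
    exact ⟨u, hx⟩
  have hne' : (g ⁻¹' range f)ᶜ.Nonempty := by
    obtain ⟨_, ⟨u, rfl⟩, hu⟩ := not_subset.1 hgf
    exact ⟨u, hu⟩
  rcases (hf.isOpen_range.preimage hg.continuous).eq_Iio_or_eq_Ioi_or_eq_Iio_union_Ioi
    (ordConnected_compl_preimage_range hf hg hfg) hne hne' with
    ⟨b, hA⟩ | ⟨a, hA⟩ | ⟨b, a, hba, hA⟩
  · exact Or.inl (isFreeInterval_union_of_preimage_eq_Iio hf hg hA)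
  · exact Or.inl (isFreeInterval_union_of_preimage_eq_Ioi hf hg hA)
  · exact Or.inr (exists_circle_of_preimage_eq_Iio_union_Ioi hf hg hA hba hfg)

end Main

theorem stmt1_general {X : Type*} [TopologicalSpace X] [ConnectedSpace X]
    [TopologicalSpace.MetrizableSpace X] (hX : IsEmpty (X ≃ₜ AddCircle (1 : ℝ)))
    (J₁ J₂ : Set X) (h₁ : IsFreeInterval J₁) (h₂ : IsFreeInterval J₂)
    (hmeet : (J₁ ∩ J₂).Nonempty) :
    IsFreeInterval (J₁ ∪ J₂) := by
  obtain ⟨f, hf, rfl⟩ := isFreeInterval_iff_exists_isOpenEmbedding.1 h₁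
  obtain ⟨g, hg, rfl⟩ := isFreeInterval_iff_exists_isOpenEmbedding.1 h₂
  refine (isFreeInterval_union_or_exists_circle hf hg hmeet).resolve_right ?_
  rintro ⟨e, he, heinj, hrange⟩
  have huniv : range e = univ := IsClopen.eq_univ
    ⟨(isCompact_range he).isClosed, hrange ▸ hf.isOpen_range.union hg.isOpen_range⟩
    (range_nonempty e)
  exact hX.false (he.homeoOfEquivCompactToT2
    (f := Equiv.ofBijective e ⟨heinj, range_eq_univ.1 huniv⟩)).symm

/-- In a continuum not homeomorphic to the circle, the union of two
non-disjoint free intervals is a free interval. -/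
theorem stmt1 {X : Type*} [TopologicalSpace X] [CompactSpace X] [ConnectedSpace X]
    [TopologicalSpace.MetrizableSpace X] (hX : IsEmpty (X ≃ₜ AddCircle (1 : ℝ)))
    (J₁ J₂ : Set X) (h₁ : IsFreeInterval J₁) (h₂ : IsFreeInterval J₂)
    (hmeet : (J₁ ∩ J₂).Nonempty) :
    IsFreeInterval (J₁ ∪ J₂) :=
  stmt1_general hX J₁ J₂ h₁ h₂ hmeet
end

section
/- Let X be a compact metrizable space and f : X → X a continuous map. Suppose there exist nonempty closed pairwise disjoint subsets A₁, …, A_m of X, a positive integer k, and for each i ∈ {1, …, m} a positive integer p_i such that the number of indices j ∈ {1, …, m} with f^{p_i}(A_i) ⊇ A_j is at least k. Then, with p = max{p₁, …, p_m}, the topological entropy of f satisfies h(f) ≥ (1/p)·log k. -/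
open Filter

variable {X : Type*} [MetricSpace X]

/-- A set `E` is `(n, ε)`-separated for `f` if any two distinct points of `E` are moved
at least `ε` apart by some iterate `f^i`, `0 ≤ i < n`. -/
def IsDynSeparated (f : X → X) (n : ℕ) (ε : ℝ) (E : Set X) : Prop :=
  ∀ x ∈ E, ∀ y ∈ E, x ≠ y → ∃ i < n, ε < dist (f^[i] x) (f^[i] y)

/-- The maximal cardinality of a finite `(n, ε)`-separated set for `f`. -/
noncomputable def maxSepCard (f : X → X) (n : ℕ) (ε : ℝ) : ℕ :=
  sSup {k : ℕ | ∃ E : Finset X, IsDynSeparated f n ε ↑E ∧ E.card = k}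

/-- Bowen's topological entropy via `(n, ε)`-separated sets:
`h(f) = sup_{ε > 0} limsup_{n → ∞} (1/n) log (maximal cardinality of an
`(n, ε)`-separated set)`. -/
noncomputable def bowenEntropy (f : X → X) : EReal :=
  ⨆ (ε : ℝ) (_ : 0 < ε),
    Filter.limsup (fun n : ℕ => ((Real.log (maxSepCard f n ε) / n : ℝ) : EReal)) atTop

/-!
Fix `ε > 0` below the distance between any two of the sets `Aⱼ`. By induction on `L`, every `Aᵢ`
contains an `(L p + 1, ε)`-separated set of at least `k ^ L` points: pull back along `f^[pᵢ]`
the sets already found in the `Aⱼ ⊆ f^[pᵢ] '' Aᵢ`. Two pulled-back points coming from different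
`Aⱼ` are `ε`-apart at time `pᵢ`, two from the same `Aⱼ` are separated later. Taking
`L = ⌊(n - 1) / p⌋` gives `log (maxSepCard f n ε) ≥ (n / p - 1) log k`.
-/

open Topology

namespace IsDynSeparated

variable {f : X → X} {n : ℕ} {ε : ℝ}

lemma mono {E : Set X} (hE : IsDynSeparated f n ε E) {n' : ℕ} (hn : n ≤ n') :
    IsDynSeparated f n' ε E := fun x hx y hy hxy =>
  let ⟨i, hi, hd⟩ := hE x hx y hy hxy
  ⟨i, hi.trans_le hn, hd⟩

lemma image_of_leftInvOn {F : Set X} (hF : IsDynSeparated f n ε F) {g : X → X} {q : ℕ}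
    (hg : Set.LeftInvOn f^[q] g F) : IsDynSeparated f (q + n) ε (g '' F) := by
  rintro _ ⟨x, hx, rfl⟩ _ ⟨y, hy, rfl⟩ hxy
  obtain ⟨i, hi, hd⟩ := hF x hx y hy (ne_of_apply_ne g hxy)
  refine ⟨i + q, by omega, ?_⟩
  rwa [Function.iterate_add_apply, Function.iterate_add_apply, hg hx, hg hy]

lemma biUnion {ι : Type*} {s : Set ι} {E : ι → Set X} (hn : 0 < n)
    (hE : ∀ i ∈ s, IsDynSeparated f n ε (E i))
    (hfar : Pairwise fun i j => ∀ x ∈ E i, ∀ y ∈ E j, ε < dist x y) :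
    IsDynSeparated f n ε (⋃ i ∈ s, E i) := by
  intro x hx y hy hxy
  obtain ⟨i, hi, hx⟩ := Set.mem_iUnion₂.1 hx
  obtain ⟨j, hj, hy⟩ := Set.mem_iUnion₂.1 hy
  rcases eq_or_ne i j with rfl | hij
  · exact hE i hi x hx y hy hxy
  · exact ⟨0, hn, hfar hij x hx y hy⟩

end IsDynSeparated

lemma bddAbove_card_isDynSeparated [CompactSpace X] (f : X → X) (n : ℕ) {ε : ℝ} (hε : 0 < ε) :
    BddAbove {k : ℕ | ∃ E : Finset X, IsDynSeparated f n ε ↑E ∧ E.card = k} := by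
  obtain ⟨t, -, ht, hcover⟩ := finite_cover_balls_of_compact (isCompact_univ (X := X)) (half_pos hε)
  choose c hct hc using fun x => Set.mem_iUnion₂.1 (hcover (Set.mem_univ x))
  -- points of a separated set are told apart by the `ε/2`-balls their orbits visit
  have hcode := Set.Finite.pi (t := fun _ : Fin n => t) fun _ => ht
  refine ⟨hcode.toFinset.card, ?_⟩
  rintro _ ⟨E, hE, rfl⟩
  refine Finset.card_le_card_of_injOn (fun x i => c (f^[i] x)) (fun x _ => ?_) ?_
  · simpa using fun i : Fin n => hct (f^[i] x)
  · intro x hx y hy hcxy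
    by_contra hxy
    obtain ⟨i, hi, hd⟩ := hE x hx y hy hxy
    have hc' : c (f^[i] x) = c (f^[i] y) := congrFun hcxy ⟨i, hi⟩
    have hx' := Metric.mem_ball.1 (hc (f^[i] x))
    have hy' := Metric.mem_ball'.1 (hc (f^[i] y))
    rw [hc'] at hx'
    linarith [dist_triangle (f^[i] x) (c (f^[i] y)) (f^[i] y)]

lemma le_maxSepCard [CompactSpace X] {f : X → X} {n : ℕ} {ε : ℝ} (hε : 0 < ε) {E : Finset X}
    (hE : IsDynSeparated f n ε E) : E.card ≤ maxSepCard f n ε :=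
  le_csSup (bddAbove_card_isDynSeparated f n hε) ⟨E, hE, rfl⟩

lemma exists_pos_forall_lt_dist_of_pairwise_disjoint {ι : Type*} [Finite ι] {A : ι → Set X}
    (hA : ∀ i, IsCompact (A i)) (hdisj : Pairwise fun i j => Disjoint (A i) (A j)) :
    ∃ ε > 0, Pairwise fun i j => ∀ x ∈ A i, ∀ y ∈ A j, ε < dist x y := by
  suffices h : ∀ i j, ∀ᶠ ε in 𝓝[>] (0 : ℝ),
      i ≠ j → ∀ x ∈ A i, ∀ y ∈ A j, ε < dist x y by
    have h' := Filter.eventually_all.2 fun i => Filter.eventually_all.2 (h i)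
    obtain ⟨ε, hsep, hε⟩ := (h'.and self_mem_nhdsWithin).exists
    exact ⟨ε, hε, fun i j => hsep i j⟩
  intro i j
  rcases eq_or_ne i j with rfl | hij
  · exact Filter.Eventually.of_forall fun _ h => absurd rfl h
  obtain ⟨r, hr, hlt⟩ := Metric.exists_pos_forall_lt_edist (hA i) (hA j).isClosed (hdisj hij)
  filter_upwards [Ioo_mem_nhdsGT (NNReal.coe_pos.2 hr)] with ε hε _ x hx y hy
  have hr' : r < nndist x y := by
    have := hlt x hx y hy
    rwa [edist_nndist, ENNReal.coe_lt_coe] at this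
  exact hε.2.trans hr'

lemma exists_isDynSeparated_pow_le_card {ι : Type*} [Fintype ι] {f : X → X} {A : ι → Set X}
    (hne : ∀ i, (A i).Nonempty) {ε : ℝ} (hε : 0 ≤ ε)
    (hfar : Pairwise fun i j => ∀ x ∈ A i, ∀ y ∈ A j, ε < dist x y)
    {p : ι → ℕ} {P : ℕ} (hpP : ∀ i, p i ≤ P) {k : ℕ}
    (hhorse : ∀ i, k ≤ Nat.card {j // A j ⊆ f^[p i] '' A i}) (L : ℕ) (i : ι) :
    ∃ E : Finset X, ↑E ⊆ A i ∧ k ^ L ≤ E.card ∧ IsDynSeparated f (L * P + 1) ε E := by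
  classical
  induction L generalizing i with
  | zero =>
    obtain ⟨x, hx⟩ := hne i
    exact ⟨{x}, by simpa using hx, by simp, by simp [IsDynSeparated]⟩
  | succ L ih =>
    choose E hEA hEcard hEsep using ih
    obtain ⟨x₀, -⟩ := hne i
    have : Nonempty X := ⟨x₀⟩
    set S := Finset.univ.filter fun j => A j ⊆ f^[p i] '' A i
    set F := S.biUnion E
    have hFA : ↑F ⊆ f^[p i] '' A i := by
      simp only [F, Finset.coe_biUnion, Set.iUnion₂_subset_iff]
      intro j hj
      exact (hEA j).trans (Finset.mem_filter.1 hj).2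
    have hsurj : Set.SurjOn f^[p i] (A i) F := (Set.surjOn_image _ _).mono subset_rfl hFA
    have hinv : Set.LeftInvOn f^[p i] (Function.invFunOn f^[p i] (A i)) F :=
      hsurj.rightInvOn_invFunOn
    refine ⟨F.image (Function.invFunOn f^[p i] (A i)), ?_, ?_, ?_⟩
    · simpa using hsurj.mapsTo_invFunOn.image_subset
    · have hS : k ≤ S.card := by
        simpa [S, Nat.card_eq_fintype_card, Fintype.card_subtype] using hhorse i
      have hdisj : (S : Set ι).PairwiseDisjoint E := fun j _ j' _ hjj' =>
        Finset.disjoint_left.2 fun x hx hx' =>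
          ((hfar hjj' x (hEA j hx) x (hEA j' hx')).trans_eq (dist_self x)).not_ge hε
      calc k ^ (L + 1) ≤ S.card • k ^ L := by
            rw [pow_succ', smul_eq_mul]
            exact Nat.mul_le_mul_right _ hS
        _ ≤ ∑ j ∈ S, (E j).card := Finset.card_nsmul_le_sum _ _ _ fun j _ => hEcard j
        _ = F.card := (Finset.card_biUnion hdisj).symm
        _ = _ := (Finset.card_image_of_injOn hinv.injOn).symm
    · have hFsep : IsDynSeparated f (L * P + 1) ε F := by
        rw [Finset.coe_biUnion]
        exact IsDynSeparated.biUnion (Nat.succ_pos _) (fun j _ => hEsep j)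
          fun j j' hjj' x hx y hy => hfar hjj' x (hEA j hx) y (hEA j' hy)
      rw [Finset.coe_image]
      exact (hFsep.image_of_leftInvOn hinv).mono (by nlinarith [hpP i])

lemma le_bowenEntropy_of_pow_le_maxSepCard {f : X → X} {k P : ℕ} (hk : 0 < k) (hP : 0 < P)
    {ε : ℝ} (hε : 0 < ε) (h : ∀ L n, L * P < n → k ^ L ≤ maxSepCard f n ε) :
    ((Real.log k / P : ℝ) : EReal) ≤ bowenEntropy f := by
  have hg : Filter.Tendsto (fun n : ℕ => (1 / P - 1 / n) * Real.log k) atTop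
      (𝓝 (Real.log k / P)) := by
    simpa [div_eq_inv_mul] using
      ((tendsto_one_div_atTop_nhds_zero_nat).const_sub (1 / (P : ℝ))).mul_const (Real.log k)
  have hle : ∀ᶠ n : ℕ in atTop,
      (1 / P - 1 / n) * Real.log k ≤ Real.log (maxSepCard f n ε) / n := by
    filter_upwards [eventually_gt_atTop 0] with n hn
    have hlow := Nat.div_mul_le_self (n - 1) P
    have hup := Nat.lt_div_mul_add (a := n - 1) hP
    set L := (n - 1) / P
    have hLn : L * P < n := by omega
    have hnL : (n : ℝ) / P - 1 ≤ L := by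
      rw [sub_le_iff_le_add, div_le_iff₀ (by positivity), add_mul, one_mul]
      exact_mod_cast (by omega : n ≤ L * P + P)
    have hlog : L * Real.log k ≤ Real.log (maxSepCard f n ε) := by
      rw [← Real.log_pow]
      exact Real.log_le_log (by positivity) (mod_cast h L n hLn)
    calc (1 / P - 1 / n) * Real.log k = (n / P - 1) * Real.log k / n := by field_simp
      _ ≤ L * Real.log k / n := by gcongr
      _ ≤ _ := by gcongr
  calc ((Real.log k / P : ℝ) : EReal)
      = Filter.limsup (fun n : ℕ => (((1 / P - 1 / n) * Real.log k : ℝ) : EReal)) atTop :=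
        ((continuous_coe_real_ereal.tendsto _).comp hg).limsup_eq.symm
    _ ≤ Filter.limsup (fun n : ℕ => ((Real.log (maxSepCard f n ε) / n : ℝ) : EReal)) atTop :=
        Filter.limsup_le_limsup (hle.mono fun n hn => EReal.coe_le_coe hn)
    _ ≤ bowenEntropy f :=
        le_iSup₂ (f := fun ε (_ : 0 < ε) => Filter.limsup
          (fun n : ℕ => ((Real.log (maxSepCard f n ε) / n : ℝ) : EReal)) atTop) ε hε

theorem stmt5_general [CompactSpace X] (f : X → X)
    (m k : ℕ) (hm : 0 < m) (hk : 0 < k)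
    (A : Fin m → Set X) (hne : ∀ i, (A i).Nonempty) (hcl : ∀ i, IsClosed (A i))
    (hdisj : ∀ i j, i ≠ j → Disjoint (A i) (A j))
    (p : Fin m → ℕ) (hp : ∀ i, 0 < p i)
    (hhorse : ∀ i, k ≤ Nat.card {j : Fin m // A j ⊆ f^[p i] '' (A i)}) :
    ((Real.log k / (Finset.univ.sup p : ℕ) : ℝ) : EReal) ≤ bowenEntropy f := by
  obtain ⟨ε, hε, hfar⟩ :=
    exists_pos_forall_lt_dist_of_pairwise_disjoint (fun i => (hcl i).isCompact) hdisj
  have hle_sup : ∀ i, p i ≤ Finset.univ.sup p := fun i => Finset.le_sup (Finset.mem_univ i)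
  refine le_bowenEntropy_of_pow_le_maxSepCard hk ((hp ⟨0, hm⟩).trans_le (hle_sup _)) hε
    fun L n hLn => ?_
  obtain ⟨E, -, hcard, hE⟩ :=
    exists_isDynSeparated_pow_le_card hne hε.le hfar hle_sup hhorse L ⟨0, hm⟩
  exact hcard.trans (le_maxSepCard hε (hE.mono hLn))

/-- horseshoe lemma: if `A₁, …, A_m` are nonempty closed pairwise disjoint
sets such that each `f^{pᵢ}(Aᵢ)` contains at least `k` of the sets `Aⱼ`, then
`h(f) ≥ (1/p) log k` where `p = max pᵢ`. -/
theorem stmt5 [CompactSpace X] (f : X → X) (hf : Continuous f)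
    (m k : ℕ) (hm : 0 < m) (hk : 0 < k)
    (A : Fin m → Set X) (hne : ∀ i, (A i).Nonempty) (hcl : ∀ i, IsClosed (A i))
    (hdisj : ∀ i j, i ≠ j → Disjoint (A i) (A j))
    (p : Fin m → ℕ) (hp : ∀ i, 0 < p i)
    (hhorse : ∀ i, k ≤ Nat.card {j : Fin m // A j ⊆ f^[p i] '' (A i)}) :
    ((Real.log k / (Finset.univ.sup p : ℕ) : ℝ) : EReal) ≤ bowenEntropy f :=
  stmt5_general f m k hm hk A hne hcl hdisj p hp hhorse
end

section
/- Let a < d be real numbers, b, c ∈ (a, d), and let f : [a,b] → [a,d] and g : [c,d] → [a,d] be continuous maps such that f(a) = d, g(c) = a and g(d) ∈ f([a,b]). Then either f has a fixed point, or g has a fixed point, or there exists k ≥ 1 such that g^k ∘ f (where defined) has a fixed point. -/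
/-!
If `g` has no fixed point then, since `g c = a < c`, it moves every point of `[c, d]` strictly
to the left, by at least some `ε > 0`, so every `g`-orbit leaves `[c, d]`; in particular so does
the orbit of `g d ∈ f '' [a, b]`. Hence there is a first `s` for which `g^[s] ∘ f` is defined on
all of `[a, b]` but `g^[s] (f t) < c` for some `t`. As `g^[s] (f a) = g^[s] d` is still on the
orbit of `d` inside `[c, d]`, there is a first point `z ∈ [a, t]` with `g^[s] (f z) = c`. On
`[a, z]` the map `g^[s+1] ∘ f` is defined and continuous, sends `a` to `g^[s+1] d ≥ a` and `z`
to `g c = a ≤ z`, so it has a fixed point.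
-/

open Set Function

theorem ContinuousOn.iterate_comp {X Y : Type*} [TopologicalSpace X] [TopologicalSpace Y]
    {F : X → Y} {g : Y → Y} {s : Set X} {T : Set Y} (hF : ContinuousOn F s)
    (hg : ContinuousOn g T) {n : ℕ} (hmaps : ∀ x ∈ s, ∀ i < n, g^[i] (F x) ∈ T) :
    ContinuousOn (fun x => g^[n] (F x)) s := by
  induction n with
  | zero => simpa using hF
  | succ n ih =>
    simp only [iterate_succ_apply']
    exact hg.comp (ih fun x hx i hi => hmaps x hx i (hi.trans n.lt_succ_self))
      fun x hx => hmaps x hx n n.lt_succ_self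

theorem exists_eq_and_forall_le_of_le_of_lt {α δ : Type*} [ConditionallyCompleteLinearOrder α]
    [TopologicalSpace α] [OrderTopology α] [DenselyOrdered α] [LinearOrder δ]
    [TopologicalSpace δ] [OrderClosedTopology δ] {F : α → δ} {a x : α} {c : δ}
    (hF : ContinuousOn F (Icc a x)) (hax : a ≤ x) (ha : c ≤ F a) (hx : F x < c) :
    ∃ z ∈ Icc a x, F z = c ∧ ∀ t ∈ Icc a z, c ≤ F t := by
  set S := Icc a x ∩ F ⁻¹' Iic c
  have hS : IsCompact S := isCompact_Icc.of_isClosed_subset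
    (hF.preimage_isClosed_of_isClosed isClosed_Icc isClosed_Iic) inter_subset_left
  obtain ⟨z, ⟨hz, hzc⟩, hleast⟩ := hS.exists_isLeast ⟨x, ⟨⟨hax, le_rfl⟩, hx.le⟩⟩
  have hmin : ∀ t ∈ Icc a z, F t ≤ c → t = z := fun t ht htc =>
    le_antisymm ht.2 (hleast ⟨⟨ht.1, ht.2.trans hz.2⟩, htc⟩)
  have hzc : F z = c := by
    refine le_antisymm hzc (not_lt.1 fun hlt => hlt.ne ?_)
    obtain ⟨u, hu, hFu⟩ := intermediate_value_Icc' hz.1 (hF.mono (Icc_subset_Icc_right hz.2))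
      ⟨hlt.le, ha⟩
    rwa [← hmin u hu hFu.le]
  exact ⟨z, hz, hzc, fun t ht => not_lt.1 fun hlt => hlt.ne (by rwa [hmin t ht hlt.le])⟩

theorem exists_iterate_notMem_of_forall_lt_self {K : Set ℝ} (hK : IsCompact K) {g : ℝ → ℝ}
    (hg : ContinuousOn g K) (hlt : ∀ y ∈ K, g y < y) (y : ℝ) : ∃ n, g^[n] y ∉ K := by
  by_contra! hstay
  obtain ⟨w, hw, hmin⟩ := hK.exists_isMinOn ⟨y, hstay 0⟩ (continuousOn_id.sub hg)
  have hdrop : ∀ n : ℕ, g^[n] y ≤ y - n * (w - g w) := by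
    intro n
    induction n with
    | zero => simp
    | succ n ih =>
      have hstep : w - g w ≤ g^[n] y - g (g^[n] y) := hmin (hstay n)
      rw [iterate_succ_apply']
      push_cast
      linarith
  obtain ⟨L, hL⟩ := hK.bddBelow
  obtain ⟨n, hn⟩ := exists_nat_gt ((y - L) / (w - g w))
  rw [div_lt_iff₀ (sub_pos.2 (hlt w hw))] at hn
  linarith [hL (hstay n), hdrop n]

theorem forall_lt_self_of_left_lt_self {α : Type*} [ConditionallyCompleteLinearOrder α]
    [TopologicalSpace α] [OrderTopology α] [DenselyOrdered α] {g : α → α} {c d : α}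
    (hg : ContinuousOn g (Icc c d)) (hc : g c < c) (hne : ∀ y ∈ Icc c d, g y ≠ y) :
    ∀ y ∈ Icc c d, g y < y := by
  intro y hy
  by_contra! hle
  obtain ⟨x, hx, hfix⟩ := exists_mem_uIcc_isFixedPt
    (hg.mono (uIcc_of_ge hy.1 ▸ Icc_subset_Icc_right hy.2)) hle hc.le
  rw [uIcc_of_ge hy.1] at hx
  exact hne x (Icc_subset_Icc_right hy.2 hx) hfix

section

variable {a b c d : ℝ} {f g : ℝ → ℝ}

theorem iterate_comp_mem_Icc (hfm : MapsTo f (Icc a b) (Icc a d))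
    (hgm : MapsTo g (Icc c d) (Icc a d)) {s : ℕ} {t : ℝ} (ht : t ∈ Icc a b)
    (horbit : ∀ i < s, g^[i] (f t) ∈ Icc c d) : g^[s] (f t) ∈ Icc a d := by
  cases s with
  | zero => exact hfm ht
  | succ s =>
    rw [iterate_succ_apply']
    exact hgm (horbit s s.lt_succ_self)

theorem exists_isFixedPt_iterate_comp_of_exit (hf : ContinuousOn f (Icc a b))
    (hfm : MapsTo f (Icc a b) (Icc a d)) (hg : ContinuousOn g (Icc c d))
    (hgm : MapsTo g (Icc c d) (Icc a d)) (hfa : f a = d) (hgc : g c = a) {s : ℕ}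
    (hs : ∀ t ∈ Icc a b, ∀ i < s, g^[i] (f t) ∈ Icc c d) (hd : g^[s] d ∈ Icc c d)
    (hexit : ¬ ∀ t ∈ Icc a b, ∀ i < s + 1, g^[i] (f t) ∈ Icc c d) :
    ∃ x ∈ Icc a b, (∀ i < s + 1, g^[i] (f x) ∈ Icc c d) ∧ g^[s + 1] (f x) = x := by
  obtain ⟨t, ht, hlt⟩ : ∃ t ∈ Icc a b, g^[s] (f t) < c := by
    push Not at hexit
    obtain ⟨t, ht, i, hi, hnot⟩ := hexit
    rcases Nat.lt_succ_iff_lt_or_eq.1 hi with hi | rfl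
    · exact absurd (hs t ht i hi) hnot
    · exact ⟨t, ht, not_le.1 fun hle => hnot ⟨hle, (iterate_comp_mem_Icc hfm hgm ht (hs t ht)).2⟩⟩
  have hsub : Icc a t ⊆ Icc a b := Icc_subset_Icc_right ht.2
  obtain ⟨z, hz, hzc, hcle⟩ := exists_eq_and_forall_le_of_le_of_lt
    ((hf.mono hsub).iterate_comp hg fun u hu => hs u (hsub hu)) ht.1 (hfa ▸ hd.1) hlt
  have hza : Icc a z ⊆ Icc a b := (Icc_subset_Icc_right hz.2).trans hsub
  have horbit : ∀ u ∈ Icc a z, ∀ i < s + 1, g^[i] (f u) ∈ Icc c d := by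
    intro u hu i hi
    rcases Nat.lt_succ_iff_lt_or_eq.1 hi with hi | rfl
    · exact hs u (hza hu) i hi
    · exact ⟨hcle u hu, (iterate_comp_mem_Icc hfm hgm (hza hu) (hs u (hza hu))).2⟩
  obtain ⟨x, hx, hfix⟩ := exists_mem_Icc_isFixedPt ((hf.mono hza).iterate_comp hg horbit) hz.1
    (by rw [iterate_succ_apply', hfa]; exact (hgm hd).1)
    (by rw [iterate_succ_apply', hzc, hgc]; exact hz.1)
  exact ⟨x, hza hx, horbit x hx, hfix⟩

end

theorem stmt6_general (a b c d : ℝ) (hc : c ∈ Ioo a d)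
    (f g : ℝ → ℝ)
    (hf : ContinuousOn f (Icc a b)) (hfm : MapsTo f (Icc a b) (Icc a d))
    (hg : ContinuousOn g (Icc c d)) (hgm : MapsTo g (Icc c d) (Icc a d))
    (hfa : f a = d) (hgc : g c = a) (hgd : g d ∈ f '' (Icc a b)) :
    (∃ x ∈ Icc a b, f x = x) ∨ (∃ y ∈ Icc c d, g y = y) ∨
      (∃ k : ℕ, 1 ≤ k ∧ ∃ x ∈ Icc a b,
        (∀ i < k, g^[i] (f x) ∈ Icc c d) ∧ g^[k] (f x) = x) := by
  obtain ⟨hac, hcd⟩ := hc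
  by_cases hfixg : ∃ y ∈ Icc c d, g y = y
  · exact Or.inr (Or.inl hfixg)
  push Not at hfixg
  obtain ⟨x₁, hx₁, hfx₁⟩ := hgd
  obtain ⟨n, hn⟩ := exists_iterate_notMem_of_forall_lt_self isCompact_Icc hg
    (forall_lt_self_of_left_lt_self hg (hgc.trans_lt hac) hfixg) (g d)
  obtain ⟨s, hs, hexit⟩ := Nat.exists_not_and_succ_of_not_zero_of_exists
    (p := fun r => ¬ ∀ t ∈ Icc a b, ∀ i < r, g^[i] (f t) ∈ Icc c d) (by simp)
    ⟨n + 1, fun h => hn (hfx₁ ▸ h x₁ hx₁ n n.lt_succ_self)⟩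
  rw [not_not] at hs
  have hd : g^[s] d ∈ Icc c d := by
    cases s with
    | zero => exact ⟨hcd.le, le_rfl⟩
    | succ s =>
      rw [iterate_succ_apply, ← hfx₁]
      exact hs x₁ hx₁ s s.lt_succ_self
  exact Or.inr (Or.inr ⟨s + 1, s.succ_pos,
    exists_isFixedPt_iterate_comp_of_exit hf hfm hg hgm hfa hgc hs hd hexit⟩)

/-- Given continuous `f : [a,b] → [a,d]` and `g : [c,d] → [a,d]` with
`f(a) = d`, `g(c) = a` and `g(d) ∈ f([a,b])`, either `f` has a fixed point, or `g` has a
fixed point, or some composition `g^k ∘ f` (where defined) has a fixed point. -/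
theorem stmt6 (a b c d : ℝ) (had : a < d) (hb : b ∈ Ioo a d) (hc : c ∈ Ioo a d)
    (f g : ℝ → ℝ)
    (hf : ContinuousOn f (Icc a b)) (hfm : MapsTo f (Icc a b) (Icc a d))
    (hg : ContinuousOn g (Icc c d)) (hgm : MapsTo g (Icc c d) (Icc a d))
    (hfa : f a = d) (hgc : g c = a) (hgd : g d ∈ f '' (Icc a b)) :
    (∃ x ∈ Icc a b, f x = x) ∨ (∃ y ∈ Icc c d, g y = y) ∨
      (∃ k : ℕ, 1 ≤ k ∧ ∃ x ∈ Icc a b,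
        (∀ i < k, g^[i] (f x) ∈ Icc c d) ∧ g^[k] (f x) = x) :=
  stmt6_general a b c d hc f g hf hfm hg hgm hfa hgc hgd
end

section
/- Let X be a connected topological space and a, b ∈ X be points such that X \ {a} = A₁ ∪ A₂ and X \ {b} = B₁ ∪ B₂, where in each case the two sets are nonempty, disjoint, and separated in X. If a ∈ B₁ and b ∈ A₂, then B₂ ∪ {b} ⊆ A₂. -/
/-!
The set `A₁ ∩ B₂` is separated from `A₂ ∪ B₁`, and since `a ∈ B₁` and `b ∈ A₂` these two sets
cover `X`. Connectedness forces `A₁ ∩ B₂ = ∅` because `b ∈ A₂`, so every point of `B₂`, which is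
not `a`, lies in `A₂`.
-/

open Set

section

variable {X : Type*} [TopologicalSpace X]

def Separated (s t : Set X) : Prop :=
  Disjoint (closure s) t ∧ Disjoint s (closure t)

namespace Separated

variable {s t s' t' : Set X}

theorem symm (h : Separated s t) : Separated t s :=
  ⟨h.2.symm, h.1.symm⟩

theorem disjoint (h : Separated s t) : Disjoint s t :=
  h.1.mono_left subset_closure

theorem inter_union (h : Separated s t) (h' : Separated s' t') :
    Separated (s ∩ s') (t ∪ t') := by
  refine ⟨disjoint_union_right.2 ⟨?_, ?_⟩, ?_⟩
  · exact h.1.mono_left (closure_mono inter_subset_left)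
  · exact h'.1.mono_left (closure_mono inter_subset_right)
  · rw [closure_union]
    exact disjoint_union_right.2
      ⟨h.2.mono_left inter_subset_left, h'.2.mono_left inter_subset_right⟩

theorem eq_empty_of_union_eq_univ [PreconnectedSpace X] (h : Separated s t)
    (hst : s ∪ t = univ) (ht : t.Nonempty) : s = ∅ := by
  have hcompl : IsCompl s t := ⟨h.disjoint, codisjoint_iff.2 hst⟩
  have hs_closed : IsClosed s :=
    closure_subset_iff_isClosed.1 (hcompl.symm.compl_eq ▸ h.1.subset_compl_right)
  have ht_closed : IsClosed t :=
    closure_subset_iff_isClosed.1 (hcompl.compl_eq ▸ h.2.subset_compl_left)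
  have hs_open : IsOpen s := hcompl.symm.compl_eq ▸ ht_closed.isOpen_compl
  refine (isClopen_iff.1 ⟨hs_closed, hs_open⟩).resolve_right fun hs => ?_
  exact ht.ne_empty (by rw [← hcompl.compl_eq, hs, compl_univ])

end Separated

end

theorem stmt9_general {X : Type*} [TopologicalSpace X] [ConnectedSpace X] (a b : X)
    (A₁ A₂ B₁ B₂ : Set X)
    (hAcompl : ({a}ᶜ : Set X) = A₁ ∪ A₂)
    (hAsep₁ : Disjoint (closure A₁) A₂) (hAsep₂ : Disjoint A₁ (closure A₂))
    (hBcompl : ({b}ᶜ : Set X) = B₁ ∪ B₂)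
    (hBsep₁ : Disjoint (closure B₁) B₂) (hBsep₂ : Disjoint B₁ (closure B₂))
    (haB : a ∈ B₁) (hbA : b ∈ A₂) :
    B₂ ∪ {b} ⊆ A₂ := by
  have hB : Separated B₁ B₂ := ⟨hBsep₁, hBsep₂⟩
  have hsep : Separated (A₁ ∩ B₂) (A₂ ∪ B₁) :=
    Separated.inter_union ⟨hAsep₁, hAsep₂⟩ hB.symm
  have hmem_A : ∀ x, x ≠ a → x ∈ A₁ ∪ A₂ := fun x hx => hAcompl ▸ hx
  have hmem_B : ∀ x, x ≠ b → x ∈ B₁ ∪ B₂ := fun x hx => hBcompl ▸ hx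
  have hcover : A₁ ∩ B₂ ∪ (A₂ ∪ B₁) = univ := by
    refine eq_univ_of_forall fun x => ?_
    rcases eq_or_ne x a with rfl | hxa
    · exact Or.inr (Or.inr haB)
    rcases eq_or_ne x b with rfl | hxb
    · exact Or.inr (Or.inl hbA)
    rcases hmem_A x hxa with hxA₁ | hxA₂
    · rcases hmem_B x hxb with hxB₁ | hxB₂
      · exact Or.inr (Or.inr hxB₁)
      · exact Or.inl ⟨hxA₁, hxB₂⟩
    · exact Or.inr (Or.inl hxA₂)
  have hempty : A₁ ∩ B₂ = ∅ := hsep.eq_empty_of_union_eq_univ hcover ⟨b, Or.inl hbA⟩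
  rintro x (hx | rfl)
  · have hxa : x ≠ a := fun h => hB.disjoint.ne_of_mem haB hx h.symm
    exact (hmem_A x hxa).resolve_left fun hxA₁ => hempty.subset ⟨hxA₁, hx⟩
  · exact hbA

/-- for cut points `a`, `b` of a connected space `X` with separations
`X \ {a} = A₁ ∪ A₂` and `X \ {b} = B₁ ∪ B₂`, if `a ∈ B₁` and `b ∈ A₂` then
`B₂ ∪ {b} ⊆ A₂`. -/
theorem stmt9 {X : Type*} [TopologicalSpace X] [ConnectedSpace X] (a b : X)
    (A₁ A₂ B₁ B₂ : Set X)
    (hAcompl : ({a}ᶜ : Set X) = A₁ ∪ A₂) (hA₁ : A₁.Nonempty) (hA₂ : A₂.Nonempty)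
    (hAdisj : Disjoint A₁ A₂)
    (hAsep₁ : Disjoint (closure A₁) A₂) (hAsep₂ : Disjoint A₁ (closure A₂))
    (hBcompl : ({b}ᶜ : Set X) = B₁ ∪ B₂) (hB₁ : B₁.Nonempty) (hB₂ : B₂.Nonempty)
    (hBdisj : Disjoint B₁ B₂)
    (hBsep₁ : Disjoint (closure B₁) B₂) (hBsep₂ : Disjoint B₁ (closure B₂))
    (haB : a ∈ B₁) (hbA : b ∈ A₂) :
    B₂ ∪ {b} ⊆ A₂ :=
  stmt9_general a b A₁ A₂ B₁ B₂ hAcompl hAsep₁ hAsep₂ hBcompl hBsep₁ hBsep₂ haB hbA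
end

section
/- Let X be a connected topological space, C a connected open subset of X, and suppose X \ C = A ∪ B with A, B nonempty, disjoint and separated in X. Then A and B are closed in X, and both ∂C ∩ A ≠ ∅ and ∂C ∩ B ≠ ∅, where ∂C denotes the boundary of C. -/
/-!
Since `Cᶜ = A ∪ B` is closed and `closure A` misses `B`, the set `A` is closed, and likewise `B`.
The frontier of `A` lies in `A` and in `closure Aᶜ ⊆ closure C ∪ B`, hence in `closure C \ C =
∂C`. As `X` is connected and `A` is neither empty nor everything, `∂A` is nonempty, so `∂C`
meets `A`; symmetrically it meets `B`.
-/

open Set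

section

variable {X : Type*} [TopologicalSpace X] {C A B : Set X}

lemma isClosed_of_isClosed_union_of_disjoint_closure (hAB : IsClosed (A ∪ B))
    (hsep : Disjoint (closure A) B) : IsClosed A := by
  refine isClosed_of_closure_subset fun x hx => ?_
  have hxAB : x ∈ A ∪ B := hAB.closure_subset_iff.mpr subset_union_left hx
  exact hxAB.resolve_right (disjoint_left.mp hsep hx)

lemma frontier_subset_frontier_of_compl_eq_union (hC : IsOpen C) (hcompl : Cᶜ = A ∪ B)
    (hB : IsClosed B) (hsep : Disjoint (closure A) B) : frontier A ⊆ frontier C := by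
  intro x hx
  have hxA : x ∈ closure A := frontier_subset_closure hx
  have hxC : x ∉ C :=
    hC.isClosed_compl.closure_subset_iff.mpr (hcompl ▸ subset_union_left) hxA
  have hAc : Aᶜ ⊆ C ∪ B := by
    rw [compl_subset_comm, compl_union, hcompl]
    exact fun y ⟨hyAB, hyB⟩ => hyAB.resolve_right hyB
  have hxCB : x ∈ closure C ∪ B := by
    rw [← hB.closure_eq, ← closure_union]
    exact closure_mono hAc (frontier_subset_closure (frontier_compl A ▸ hx))
  rw [hC.frontier_eq]
  exact ⟨hxCB.resolve_right (disjoint_left.mp hsep hxA), hxC⟩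

lemma frontier_inter_nonempty_of_compl_eq_union [PreconnectedSpace X] (hC : IsOpen C)
    (hcompl : Cᶜ = A ∪ B) (hA_closed : IsClosed A) (hB_closed : IsClosed B)
    (hAB : Disjoint A B) (hA : A.Nonempty) (hB : B.Nonempty) :
    (frontier C ∩ A).Nonempty := by
  have hA_ne_univ : A ≠ univ := by
    obtain ⟨b, hb⟩ := hB
    exact fun h => disjoint_left.mp hAB (h ▸ mem_univ b) hb
  obtain ⟨x, hx⟩ := nonempty_frontier_iff.mpr ⟨hA, hA_ne_univ⟩
  have hsep : Disjoint (closure A) B := by rwa [hA_closed.closure_eq]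
  exact ⟨x, frontier_subset_frontier_of_compl_eq_union hC hcompl hB_closed hsep hx,
    frontier_subset_iff_isClosed.mpr hA_closed hx⟩

end

theorem stmt10_general {X : Type*} [TopologicalSpace X] [ConnectedSpace X]
    (C A B : Set X) (hCopen : IsOpen C) (hcompl : Cᶜ = A ∪ B)
    (hA : A.Nonempty) (hB : B.Nonempty)
    (hsep₁ : Disjoint (closure A) B) (hsep₂ : Disjoint A (closure B)) :
    IsClosed A ∧ IsClosed B ∧ (frontier C ∩ A).Nonempty ∧ (frontier C ∩ B).Nonempty := by
  have hcompl' : Cᶜ = B ∪ A := union_comm A B ▸ hcompl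
  have hA_closed : IsClosed A :=
    isClosed_of_isClosed_union_of_disjoint_closure (hcompl ▸ hCopen.isClosed_compl) hsep₁
  have hB_closed : IsClosed B :=
    isClosed_of_isClosed_union_of_disjoint_closure (hcompl' ▸ hCopen.isClosed_compl) hsep₂.symm
  have hAB : Disjoint A B := hsep₁.mono_left subset_closure
  exact ⟨hA_closed, hB_closed,
    frontier_inter_nonempty_of_compl_eq_union hCopen hcompl hA_closed hB_closed hAB hA hB,
    frontier_inter_nonempty_of_compl_eq_union hCopen hcompl' hB_closed hA_closed hAB.symm hB hA⟩

/-- If `C` is a connected open subset of a connected space `X` and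
`X \ C = A ∪ B` with `A`, `B` nonempty, disjoint and separated, then `A`, `B` are closed
and the boundary of `C` meets both `A` and `B`. -/
theorem stmt10 {X : Type*} [TopologicalSpace X] [ConnectedSpace X]
    (C A B : Set X) (hC : IsConnected C) (hCopen : IsOpen C) (hcompl : Cᶜ = A ∪ B)
    (hA : A.Nonempty) (hB : B.Nonempty) (hAB : Disjoint A B)
    (hsep₁ : Disjoint (closure A) B) (hsep₂ : Disjoint A (closure B)) :
    IsClosed A ∧ IsClosed B ∧ (frontier C ∩ A).Nonempty ∧ (frontier C ∩ B).Nonempty :=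
  stmt10_general C A B hCopen hcompl hA hB hsep₁ hsep₂
end

section
/- Let X be a connected topological space, C a connected closed subset of X, and suppose X \ C = A ∪ B with A, B nonempty, disjoint and separated in X. Then A and B are open in X, and both C ∩ ∂A ≠ ∅ and C ∩ ∂B ≠ ∅. -/
/-! `A` is the complement of the closed set `C ∪ closure B`, hence open, and likewise `B`.
A point of `frontier A` lies in `closure A \ A`, so it is neither in `A` nor, by separation,
in `B`; it therefore lies in `C`. Finally `A` is a nonempty proper subset of the connected
space `X`, so it is not clopen and its frontier is nonempty. -/

open Set

section SeparatedComplement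

variable {X : Type*} [TopologicalSpace X] {C A B : Set X}

theorem IsClosed.isOpen_of_compl_eq_union (hC : IsClosed C) (hcompl : Cᶜ = A ∪ B)
    (hsep : Disjoint A (closure B)) : IsOpen A := by
  have hA : A = Cᶜ ∩ (closure B)ᶜ := by
    refine Subset.antisymm (fun x hx => ⟨hcompl ▸ Or.inl hx, hsep.notMem_of_mem_left hx⟩) ?_
    rintro x ⟨hxC, hxB⟩
    rcases hcompl ▸ hxC with hxA | hxB'
    · exact hxA
    · exact absurd (subset_closure hxB') hxB
  rw [hA]
  exact hC.isOpen_compl.inter isClosed_closure.isOpen_compl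

theorem IsOpen.frontier_subset_of_compl_eq_union (hA : IsOpen A) (hcompl : Cᶜ = A ∪ B)
    (hsep : Disjoint (closure A) B) : frontier A ⊆ C := by
  intro x hx
  rw [hA.frontier_eq] at hx
  by_contra hxC
  rcases hcompl ▸ (show x ∈ Cᶜ from hxC) with hxA | hxB
  · exact hx.2 hxA
  · exact hsep.notMem_of_mem_left hx.1 hxB

theorem inter_frontier_nonempty_of_compl_eq_union [PreconnectedSpace X] (hC : IsClosed C)
    (hcompl : Cᶜ = A ∪ B) (hA : A.Nonempty) (hB : B.Nonempty)
    (hsep₁ : Disjoint (closure A) B) (hsep₂ : Disjoint A (closure B)) :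
    (C ∩ frontier A).Nonempty := by
  have hA_ne_univ : A ≠ univ := fun h =>
    hB.ne_empty (univ_disjoint.1 (by rwa [h, closure_univ] at hsep₁))
  obtain ⟨x, hx⟩ := nonempty_frontier_iff.2 ⟨hA, hA_ne_univ⟩
  exact ⟨x, (hC.isOpen_of_compl_eq_union hcompl hsep₂).frontier_subset_of_compl_eq_union
    hcompl hsep₁ hx, hx⟩

end SeparatedComplement

theorem stmt11_general {X : Type*} [TopologicalSpace X] [ConnectedSpace X]
    (C A B : Set X) (hCclosed : IsClosed C) (hcompl : Cᶜ = A ∪ B)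
    (hA : A.Nonempty) (hB : B.Nonempty)
    (hsep₁ : Disjoint (closure A) B) (hsep₂ : Disjoint A (closure B)) :
    IsOpen A ∧ IsOpen B ∧ (C ∩ frontier A).Nonempty ∧ (C ∩ frontier B).Nonempty := by
  have hcompl' : Cᶜ = B ∪ A := hcompl.trans (union_comm A B)
  exact ⟨hCclosed.isOpen_of_compl_eq_union hcompl hsep₂,
    hCclosed.isOpen_of_compl_eq_union hcompl' hsep₁.symm,
    inter_frontier_nonempty_of_compl_eq_union hCclosed hcompl hA hB hsep₁ hsep₂,
    inter_frontier_nonempty_of_compl_eq_union hCclosed hcompl' hB hA hsep₂.symm hsep₁.symm⟩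

/-- If `C` is a connected closed subset of a connected space `X` and
`X \ C = A ∪ B` with `A`, `B` nonempty, disjoint and separated, then `A`, `B` are open
and `C` meets the boundaries of both `A` and `B`. -/
theorem stmt11 {X : Type*} [TopologicalSpace X] [ConnectedSpace X]
    (C A B : Set X) (hC : IsConnected C) (hCclosed : IsClosed C) (hcompl : Cᶜ = A ∪ B)
    (hA : A.Nonempty) (hB : B.Nonempty) (hAB : Disjoint A B)
    (hsep₁ : Disjoint (closure A) B) (hsep₂ : Disjoint A (closure B)) :
    IsOpen A ∧ IsOpen B ∧ (C ∩ frontier A).Nonempty ∧ (C ∩ frontier B).Nonempty :=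
  stmt11_general C A B hCclosed hcompl hA hB hsep₁ hsep₂
end

section
/- Let X be a connected Hausdorff topological space with a free interval J (an open subset homeomorphic to an open interval of ℝ, with a fixed order ≺ induced by the homeomorphism), and let c ∈ J be a cut point of X. Then every point z ∈ J is a cut point of X. -/
/-!
Transport `J` to an open embedding `g : ℝ → X` and let `g a` be the cut point. By connectedness
`g a` lies in the closure of both sides `U`, `V` of a separation of `X \ {g a}`, so the two
rays `g (-∞, a)` and `g (a, ∞)`, being preconnected, lie on different sides, say in `U` and
in `V`. For `b > a`, moving the compact arc `g [a, b)` from `V` to `U` gives the separation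
`U ∪ g (-∞, b)`, `V \ g [a, b]` of `X \ {g b}`; points `b < a` are handled by reversing `ℝ`.
-/

open Set Topology

section

variable {X : Type*} [TopologicalSpace X]

lemma exists_partition_of_not_isPreconnected_compl_singleton [T1Space X] {c : X}
    (h : ¬IsPreconnected ({c}ᶜ : Set X)) :
    ∃ U V : Set X, IsOpen U ∧ IsOpen V ∧ Disjoint U V ∧ U ∪ V = {c}ᶜ ∧
      U.Nonempty ∧ V.Nonempty := by
  simp only [IsPreconnected, not_forall, not_nonempty_iff_eq_empty] at h
  obtain ⟨u, v, hu, hv, hcover, hu_ne, hv_ne, huv⟩ := h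
  refine ⟨{c}ᶜ ∩ u, {c}ᶜ ∩ v, isOpen_compl_singleton.inter hu,
    isOpen_compl_singleton.inter hv, ?_, ?_, hu_ne, hv_ne⟩
  · rw [disjoint_iff_inter_eq_empty, ← inter_inter_distrib_left, huv]
  · rw [← inter_union_distrib_left, inter_eq_left.mpr hcover]

lemma mem_closure_of_union_eq_compl_singleton [ConnectedSpace X] {c : X} {U V : Set X}
    (hU : IsOpen U) (hV : IsOpen V) (hUV : Disjoint U V) (hcover : U ∪ V = {c}ᶜ)
    (hV_ne : V.Nonempty) : c ∈ closure V := by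
  by_contra hc
  have hV_closed : closure V ⊆ V := fun x hx =>
    have hxUV : x ∈ U ∪ V := hcover ▸ (ne_of_mem_of_not_mem hx hc : x ≠ c)
    hxUV.resolve_left fun hxU => (hUV.symm.closure_left hU).ne_of_mem hx hxU rfl
  have hV_univ : V = univ :=
    IsClopen.eq_univ ⟨closure_subset_iff_isClosed.mp hV_closed, hV⟩ hV_ne
  exact hc (by simp [hV_univ])

lemma exists_partition_mapsTo_Iio_Ioi [ConnectedSpace X] [T1Space X] {g : ℝ → X}
    (hg : IsOpenEmbedding g) {a : ℝ} (hcut : ¬IsPreconnected ({g a}ᶜ : Set X)) :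
    ∃ U V : Set X, IsOpen U ∧ IsOpen V ∧ Disjoint U V ∧ U ∪ V = {g a}ᶜ ∧
      MapsTo g (Iio a) U ∧ MapsTo g (Ioi a) V := by
  obtain ⟨U, V, hU, hV, hUV, hcover, hU_ne, hV_ne⟩ :=
    exists_partition_of_not_isPreconnected_compl_singleton hcut
  have hside : ∀ s : Set ℝ, IsPreconnected s → a ∉ s → MapsTo g s U ∨ MapsTo g s V := by
    intro s hs has
    simp only [mapsTo_iff_image_subset]
    refine (hs.image g hg.continuous.continuousOn).subset_or_subset hU hV hUV ?_
    rintro _ ⟨t, ht, rfl⟩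
    rw [hcover]
    exact hg.injective.ne (ne_of_mem_of_not_mem ht has)
  have hnot_both : ∀ {W W' : Set X}, Disjoint W W' → W ∪ W' = {g a}ᶜ →
      (range g ∩ W').Nonempty → ¬(MapsTo g (Iio a) W ∧ MapsTo g (Ioi a) W) := by
    rintro W W' hWW' hcover' ⟨_, ⟨t, rfl⟩, ht⟩ ⟨hL, hR⟩
    have hta : t ≠ a := fun hta => (subset_union_right.trans hcover'.le ht) (hta ▸ rfl)
    rcases hta.lt_or_gt with h | h
    · exact hWW'.ne_of_mem (hL h) ht rfl
    · exact hWW'.ne_of_mem (hR h) ht rfl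
  have hcover' : V ∪ U = {g a}ᶜ := union_comm V U ▸ hcover
  have hrange_U := mem_closure_iff.mp
    (mem_closure_of_union_eq_compl_singleton hV hU hUV.symm hcover' hU_ne) _
    hg.isOpen_range ⟨a, rfl⟩
  have hrange_V := mem_closure_iff.mp
    (mem_closure_of_union_eq_compl_singleton hU hV hUV hcover hV_ne) _
    hg.isOpen_range ⟨a, rfl⟩
  rcases hside _ isPreconnected_Iio (lt_irrefl a) with hL | hL <;>
    rcases hside _ isPreconnected_Ioi (lt_irrefl a) with hR | hR
  · exact absurd ⟨hL, hR⟩ (hnot_both hUV hcover hrange_V)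
  · exact ⟨U, V, hU, hV, hUV, hcover, hL, hR⟩
  · exact ⟨V, U, hV, hU, hUV.symm, hcover', hL, hR⟩
  · exact absurd ⟨hL, hR⟩ (hnot_both hUV.symm hcover' hrange_U)

lemma not_isPreconnected_compl_singleton_of_lt [T2Space X] {g : ℝ → X}
    (hg : IsOpenEmbedding g) {a b : ℝ} (hab : a < b) {U V : Set X} (hU : IsOpen U)
    (hV : IsOpen V) (hUV : Disjoint U V) (hcover : U ∪ V = {g a}ᶜ)
    (hL : MapsTo g (Iio a) U) (hR : MapsTo g (Ioi a) V) :
    ¬IsPreconnected ({g b}ᶜ : Set X) := by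
  have hga : g a ∉ V := fun h => (subset_union_right.trans hcover.le h) rfl
  have hV_right : ∀ t, g t ∈ V → a < t := by
    intro t ht
    by_contra! hta
    rcases hta.lt_or_eq with h | rfl
    · exact hUV.ne_of_mem (hL h) ht rfl
    · exact hga ht
  have hK : IsClosed (g '' Icc a b) := (isCompact_Icc.image hg.continuous).isClosed
  have hcover' : {g b}ᶜ ⊆ (U ∪ g '' Iio b) ∪ (V \ g '' Icc a b) := by
    intro x (hxb : x ≠ g b)
    by_cases hxV : x ∈ V
    · by_cases hxK : x ∈ g '' Icc a b
      · obtain ⟨t, ⟨-, htb⟩, rfl⟩ := hxK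
        exact Or.inl (Or.inr ⟨t, htb.lt_of_ne fun h => hxb (h ▸ rfl), rfl⟩)
      · exact Or.inr ⟨hxV, hxK⟩
    · by_cases hxa : x = g a
      · exact Or.inl (Or.inr ⟨a, hab, hxa.symm⟩)
      · exact Or.inl (Or.inl ((hcover.symm ▸ hxa : x ∈ U ∪ V).resolve_right hxV))
  intro hpre
  obtain ⟨x, -, hxU, hxV, hxK⟩ := hpre (U ∪ g '' Iio b) (V \ g '' Icc a b)
    (hU.union (hg.isOpenMap _ isOpen_Iio)) (hV.sdiff hK) hcover'
    ⟨g a, hg.injective.ne hab.ne, Or.inr ⟨a, hab, rfl⟩⟩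
    ⟨g (b + 1), hg.injective.ne (by linarith), hR (by simp only [mem_Ioi]; linarith),
      fun ⟨t, ht, hgt⟩ => by linarith [ht.2, hg.injective hgt]⟩
  rcases hxU with hxU | ⟨t, htb, rfl⟩
  · exact hUV.ne_of_mem hxU hxV rfl
  · exact hxK ⟨t, ⟨(hV_right t hxV).le, le_of_lt htb⟩, rfl⟩

theorem Topology.IsOpenEmbedding.not_isPreconnected_compl_singleton [ConnectedSpace X]
    [T2Space X] {g : ℝ → X} (hg : IsOpenEmbedding g) {a : ℝ}
    (hcut : ¬IsPreconnected ({g a}ᶜ : Set X)) (b : ℝ) :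
    ¬IsPreconnected ({g b}ᶜ : Set X) := by
  obtain ⟨U, V, hU, hV, hUV, hcover, hL, hR⟩ := exists_partition_mapsTo_Iio_Ioi hg hcut
  rcases lt_trichotomy a b with hab | rfl | hab
  · exact not_isPreconnected_compl_singleton_of_lt hg hab hU hV hUV hcover hL hR
  · exact hcut
  · have hg' : IsOpenEmbedding (g ∘ Neg.neg) := hg.comp (Homeomorph.neg ℝ).isOpenEmbedding
    simpa using not_isPreconnected_compl_singleton_of_lt hg' (neg_lt_neg hab) hV hU hUV.symm
      (by simpa [union_comm] using hcover)
      (fun t ht => hR (show a < -t from lt_neg_of_lt_neg ht))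
      (fun t ht => hL (show -t < a from neg_lt_of_neg_lt ht))

end

/-- In a connected Hausdorff space with a free interval `J`, if some point
of `J` is a cut point of `X` then every point of `J` is a cut point of `X`. -/
theorem stmt12 {X : Type*} [TopologicalSpace X] [ConnectedSpace X] [T2Space X]
    (J : Set X) (hJopen : IsOpen J) (hJfree : Nonempty (↥J ≃ₜ ℝ))
    (c : X) (hc : c ∈ J) (hcut : ¬ IsPreconnected ({c}ᶜ : Set X)) :
    ∀ z ∈ J, ¬ IsPreconnected ({z}ᶜ : Set X) := by
  obtain ⟨e⟩ := hJfree
  set g : ℝ → X := Subtype.val ∘ e.symm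
  have hg : IsOpenEmbedding g := hJopen.isOpenEmbedding_subtypeVal.comp e.symm.isOpenEmbedding
  have hg_coord : ∀ x (hx : x ∈ J), g (e ⟨x, hx⟩) = x := fun x hx => by simp [g]
  intro z hz
  rw [← hg_coord z hz]
  exact hg.not_isPreconnected_compl_singleton (by rwa [hg_coord c hc]) _
end

section
/- Let X be a connected compact Hausdorff space and J a free interval of X such that X \ J is disconnected. Then X \ J has exactly two connected components. -/
/-!
Parametrize `J` by an open embedding `e : ℝ → X`. The two ends of `e`, its limit sets at `±∞`,
are nonempty, disjoint from `J`, and preconnected as directed intersections of continua; and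
`closure J \ J` lies in their union. By boundary bumping every component of `X \ J` meets the
frontier of `J`, hence contains one of the two ends. So `X \ J` has at most two components, and
exactly two since it is disconnected.
-/

open Set Topology

section

variable {X : Type*} [TopologicalSpace X]

theorem IsPreconnected.iInter_of_directed [T2Space X] {ι : Type*} [Nonempty ι] {C : ι → Set X}
    (hdir : Directed (· ⊇ ·) C) (hcomp : ∀ i, IsCompact (C i))
    (hconn : ∀ i, IsPreconnected (C i)) : IsPreconnected (⋂ i, C i) := by
  set L := ⋂ i, C i
  have hLcomp : IsCompact L :=
    (hcomp (Classical.arbitrary ι)).of_isClosed_subset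
      (isClosed_iInter fun i => (hcomp i).isClosed) (iInter_subset _ _)
  rw [isPreconnected_iff_subset_of_fully_disjoint_closed hLcomp.isClosed]
  intro a b ha hb hLab hab
  obtain ⟨U, V, hU, hV, haU, hbV, hUV⟩ :=
    SeparatedNhds.of_isCompact_isCompact (hLcomp.inter_right ha) (hLcomp.inter_right hb)
      (hab.mono inter_subset_right inter_subset_right)
  have hLUV : L ⊆ U ∪ V := fun x hx =>
    (hLab hx).imp (fun h => haU ⟨hx, h⟩) (fun h => hbV ⟨hx, h⟩)
  obtain ⟨i, hi⟩ := exists_subset_nhds_of_isCompact hdir hcomp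
    fun x hx => (hU.union hV).mem_nhds (hLUV hx)
  rcases (hconn i).subset_or_subset hU hV hUV hi with hiU | hiV
  · left
    intro x hx
    refine (hLab hx).resolve_right fun hxb => hUV.ne_of_mem ?_ (hbV ⟨hx, hxb⟩) rfl
    exact hiU (iInter_subset C i hx)
  · right
    intro x hx
    refine (hLab hx).resolve_left fun hxa => hUV.ne_of_mem (haU ⟨hx, hxa⟩) ?_ rfl
    exact hiV (iInter_subset C i hx)

theorem exists_isClopen_of_disjoint_connectedComponent [T2Space X] [CompactSpace X] {x : X}
    {F : Set X} (hF : IsClosed F) (hxF : Disjoint (connectedComponent x) F) :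
    ∃ Z, IsClopen Z ∧ x ∈ Z ∧ Disjoint Z F := by
  rw [connectedComponent_eq_iInter_isClopen, disjoint_iff_inter_eq_empty, inter_comm] at hxF
  obtain ⟨u, hu⟩ := hF.isCompact.elim_finite_subfamily_closed _ (fun Z => Z.2.1.1) hxF
  refine ⟨⋂ Z ∈ u, Z, isClopen_biInter_finset fun Z _ => Z.2.1,
    mem_iInter₂.2 fun Z _ => Z.2.2, ?_⟩
  rw [disjoint_iff_inter_eq_empty, inter_comm, hu]

/-- Boundary bumping: a clopen piece of `K` around `x` missing `frontier K` would be open in `X`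
too, hence all of `X`. -/
theorem IsClosed.connectedComponentIn_inter_frontier_nonempty [ConnectedSpace X] [CompactSpace X]
    [T2Space X] {K : Set X} (hK : IsClosed K) (hKne : K ≠ univ) {x : X} (hx : x ∈ K) :
    (connectedComponentIn K x ∩ frontier K).Nonempty := by
  have : CompactSpace K := isCompact_iff_compactSpace.mp hK.isCompact
  rw [← not_disjoint_iff_nonempty_inter, connectedComponentIn_eq_image hx, disjoint_image_left]
  intro hdisj
  obtain ⟨Z, hZ, hxZ, hZF⟩ := exists_isClopen_of_disjoint_connectedComponent
    (isClosed_frontier.preimage continuous_subtype_val) hdisj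
  obtain ⟨W, hW, rfl⟩ := isOpen_induced_iff.mp hZ.isOpen
  have hKW : Subtype.val '' (Subtype.val ⁻¹' W : Set K) = interior K ∩ W := by
    ext y
    constructor
    · rintro ⟨z, hzW, rfl⟩
      have hz : (z : X) ∉ frontier K := fun h => hZF.ne_of_mem hzW h rfl
      rw [hK.frontier_eq] at hz
      exact ⟨by simpa [z.2] using hz, hzW⟩
    · rintro ⟨hyK, hyW⟩
      exact ⟨⟨y, interior_subset hyK⟩, hyW, rfl⟩
  have hclopen : IsClopen (Subtype.val '' (Subtype.val ⁻¹' W : Set K)) :=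
    ⟨hK.isClosedMap_subtype_val _ hZ.isClosed, hKW ▸ isOpen_interior.inter hW⟩
  refine hKne (eq_univ_of_univ_subset ?_)
  rw [← hclopen.eq_univ ⟨x, ⟨x, hx⟩, hxZ, rfl⟩]
  exact image_subset_range _ _ |>.trans Subtype.range_coe.subset

theorem exists_ne_and_setOf_connectedComponentIn_eq_pair {K : Set X} {p q : X} (hp : p ∈ K)
    (hq : q ∈ K) (hK : ¬IsPreconnected K)
    (h : ∀ x ∈ K, connectedComponentIn K x = connectedComponentIn K p ∨
      connectedComponentIn K x = connectedComponentIn K q) :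
    ∃ A B : Set X, A ≠ B ∧ {C | ∃ x ∈ K, C = connectedComponentIn K x} = {A, B} := by
  refine ⟨connectedComponentIn K p, connectedComponentIn K q, fun hpq => hK ?_, ?_⟩
  · have hKp : K = connectedComponentIn K p := by
      refine (connectedComponentIn_subset K p).antisymm' fun x hx => ?_
      rcases h x hx with hxp | hxq
      · exact hxp ▸ mem_connectedComponentIn hx
      · exact hpq ▸ hxq ▸ mem_connectedComponentIn hx
    exact hKp ▸ isPreconnected_connectedComponentIn
  · ext C
    simp only [mem_ofPred_eq, mem_insert_iff, mem_singleton_iff]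
    constructor
    · rintro ⟨x, hx, rfl⟩
      exact h x hx
    · rintro (rfl | rfl)
      exacts [⟨p, hp, rfl⟩, ⟨q, hq, rfl⟩]

/-- The limit set of `e` at `+∞`; the end at `-∞` is `upperEnd (e ∘ Neg.neg)`. -/
def upperEnd (e : ℝ → X) : Set X := ⋂ t : ℝ, closure (e '' Ioi t)

theorem directed_closure_image_Ioi (e : ℝ → X) :
    Directed (· ⊇ ·) fun t : ℝ => closure (e '' Ioi t) := fun s t =>
  ⟨max s t, closure_mono (image_mono (Ioi_subset_Ioi (le_max_left s t))),
    closure_mono (image_mono (Ioi_subset_Ioi (le_max_right s t)))⟩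

theorem upperEnd_nonempty [CompactSpace X] (e : ℝ → X) : (upperEnd e).Nonempty :=
  IsCompact.nonempty_iInter_of_directed_nonempty_isCompact_isClosed _
    (directed_closure_image_Ioi e) (fun _ => (nonempty_Ioi.image e).closure)
    (fun _ => isClosed_closure.isCompact) fun _ => isClosed_closure

theorem isPreconnected_upperEnd [CompactSpace X] [T2Space X] {e : ℝ → X} (he : Continuous e) :
    IsPreconnected (upperEnd e) :=
  .iInter_of_directed (directed_closure_image_Ioi e) (fun _ => isClosed_closure.isCompact)
    fun _ => (isPreconnected_Ioi.image e he.continuousOn).closure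

theorem upperEnd_subset_compl_range {e : ℝ → X} (he : IsOpenEmbedding e) :
    upperEnd e ⊆ (range e)ᶜ := by
  rintro x hx ⟨s, rfl⟩
  have hsep : Disjoint (e '' Iio (s + 1)) (closure (e '' Ioi (s + 1))) :=
    ((disjoint_image_iff he.injective).mpr (Ioi_disjoint_Iio_of_le le_rfl).symm).closure_right
      (he.isOpenMap _ isOpen_Iio)
  exact hsep.ne_of_mem ⟨s, by simp, rfl⟩ (mem_iInter.mp hx (s + 1)) rfl

theorem closure_range_diff_subset_upperEnd_union [T2Space X] {e : ℝ → X} (he : Continuous e) :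
    closure (range e) \ range e ⊆ upperEnd e ∪ upperEnd (e ∘ Neg.neg) := by
  rintro x ⟨hxcl, hxe⟩
  by_contra hx
  simp only [upperEnd, mem_union, mem_iInter, not_or, not_forall] at hx
  obtain ⟨⟨a, ha⟩, ⟨b, hb⟩⟩ := hx
  rw [image_comp, image_neg_Ioi] at hb
  have hcover : range e ⊆ e '' Iio (-b) ∪ e '' Icc (-b) a ∪ e '' Ioi a := by
    rintro _ ⟨t, rfl⟩
    rcases lt_or_ge t (-b) with h | h
    · exact Or.inl (Or.inl ⟨t, h, rfl⟩)
    rcases le_or_gt t a with h' | h'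
    · exact Or.inl (Or.inr ⟨t, ⟨h, h'⟩, rfl⟩)
    · exact Or.inr ⟨t, h', rfl⟩
  have hIcc : IsClosed (e '' Icc (-b) a) := (isCompact_Icc.image he).isClosed
  have hx := closure_mono hcover hxcl
  rw [closure_union, closure_union, hIcc.closure_eq] at hx
  rcases hx with (h | h) | h
  · exact hb (by simpa using h)
  · exact hxe (image_subset_range _ _ h)
  · exact ha h

theorem upperEnd_comp_neg_subset_compl_range {e : ℝ → X} (he : IsOpenEmbedding e) :
    upperEnd (e ∘ Neg.neg) ⊆ (range e)ᶜ :=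
  neg_surjective.range_comp e ▸
    upperEnd_subset_compl_range (he.comp (Homeomorph.neg ℝ).isOpenEmbedding)

theorem connectedComponentIn_compl_range_eq_or_eq [ConnectedSpace X] [CompactSpace X] [T2Space X]
    {e : ℝ → X} (he : IsOpenEmbedding e) {p q x : X} (hp : p ∈ upperEnd e)
    (hq : q ∈ upperEnd (e ∘ Neg.neg)) (hx : x ∈ (range e)ᶜ) :
    connectedComponentIn (range e)ᶜ x = connectedComponentIn (range e)ᶜ p ∨
      connectedComponentIn (range e)ᶜ x = connectedComponentIn (range e)ᶜ q := by
  have hne : (range e)ᶜ ≠ univ := fun h => (range_nonempty e).ne_empty (compl_univ_iff.mp h)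
  obtain ⟨y, hxy, hy⟩ :=
    he.isOpen_range.isClosed_compl.connectedComponentIn_inter_frontier_nonempty hne hx
  rw [frontier_compl, he.isOpen_range.frontier_eq] at hy
  rw [connectedComponentIn_eq hxy]
  rcases closure_range_diff_subset_upperEnd_union he.continuous hy with hyp | hyq
  · exact .inl <| connectedComponentIn_eq <| (isPreconnected_upperEnd he.continuous)
      |>.subset_connectedComponentIn hyp (upperEnd_subset_compl_range he) hp
  · exact .inr <| connectedComponentIn_eq <| (isPreconnected_upperEnd (he.continuous.comp
      continuous_neg)).subset_connectedComponentIn hyq (upperEnd_comp_neg_subset_compl_range he) hq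

end

/-- If `X` is a connected compact Hausdorff space and `J` a free interval
with `X \ J` disconnected, then `X \ J` has exactly two connected components. -/
theorem stmt14 {X : Type*} [TopologicalSpace X] [CompactSpace X] [ConnectedSpace X]
    [T2Space X] (J : Set X) (hJopen : IsOpen J) (hJfree : Nonempty (↥J ≃ₜ ℝ))
    (hdisc : ¬ IsPreconnected (Jᶜ : Set X)) :
    ∃ A B : Set X, A ≠ B ∧
      {C : Set X | ∃ x ∈ (Jᶜ : Set X), C = connectedComponentIn Jᶜ x} = {A, B} := by
  obtain ⟨φ⟩ := hJfree
  have he : IsOpenEmbedding (Subtype.val ∘ φ.symm) :=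
    hJopen.isOpenEmbedding_subtypeVal.comp φ.symm.isOpenEmbedding
  have hrange : range (Subtype.val ∘ φ.symm) = J := by
    rw [φ.symm.surjective.range_comp, Subtype.range_coe]
  obtain ⟨p, hp⟩ := upperEnd_nonempty (Subtype.val ∘ φ.symm)
  obtain ⟨q, hq⟩ := upperEnd_nonempty (Subtype.val ∘ φ.symm ∘ Neg.neg)
  rw [← hrange] at hdisc ⊢
  exact exists_ne_and_setOf_connectedComponentIn_eq_pair (upperEnd_subset_compl_range he hp)
    (upperEnd_comp_neg_subset_compl_range he hq) hdisc
    fun x hx => connectedComponentIn_compl_range_eq_or_eq he hp hq hx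
end

section
/- Let X be a connected compact Hausdorff space and J a free interval of X. If there exists a subinterval K of J (i.e. a subset of J corresponding to a subinterval of the real interval under the homeomorphism) such that X \ K is disconnected, then X \ J is disconnected. -/
/-!
Suppose `Jᶜ` were preconnected. The arc `J ≅ ℝ` has two ends, and by compactness each end
clusters at some point, which cannot lie in `J` since the ends of `ℝ` have no cluster points.
Hence every initial or final ray of `J` is preconnected and has a point of `Jᶜ` in its
closure, so attaching it to `Jᶜ` keeps preconnectedness. As `K` corresponds to an interval,
`J \ K` is the union of an initial and a final ray, and `Kᶜ = Jᶜ ∪ (J \ K)` would be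
preconnected as well.
-/

open Set Filter Topology

lemma Set.OrdConnected.compl_eq_union {α : Type*} [LinearOrder α] {S : Set α}
    (hS : S.OrdConnected) : Sᶜ = {x | ∀ s ∈ S, x < s} ∪ {x | ∀ s ∈ S, s < x} := by
  ext x
  simp only [mem_compl_iff, mem_union, mem_ofPred_eq]
  constructor
  · intro hx
    by_contra! h
    obtain ⟨⟨s, hs, hsx⟩, ⟨t, ht, hxt⟩⟩ := h
    exact hx (hS.out hs ht ⟨hsx, hxt⟩)
  · rintro (h | h) hx
    · exact (h x hx).false
    · exact (h x hx).false

section FreeInterval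

variable {X Y : Type*} [TopologicalSpace X] [TopologicalSpace Y] [CompactSpace X] {J : Set X}

lemma compl_nonempty_of_homeomorph [NoncompactSpace Y] (e : J ≃ₜ Y) : Jᶜ.Nonempty := by
  rw [nonempty_compl]
  rintro rfl
  have : CompactSpace (univ : Set X) := isCompact_iff_compactSpace.mp isCompact_univ
  exact not_compactSpace_iff.mpr ‹_› e.compactSpace

lemma exists_mem_compl_mapClusterPt_of_homeomorph (e : J ≃ₜ Y) (l : Filter Y) [l.NeBot]
    (hl : ∀ y, ¬ ClusterPt y l) : ∃ c ∈ Jᶜ, MapClusterPt c l (fun y ↦ (e.symm y : X)) := by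
  obtain ⟨c, hc⟩ := exists_clusterPt_of_compactSpace (l.map fun y ↦ (e.symm y : X))
  refine ⟨c, fun hcJ ↦ ?_, hc⟩
  lift c to J using hcJ
  have hc' : MapClusterPt c l e.symm :=
    (IsInducing.subtypeVal.mapClusterPt_iff (f := Subtype.val)).1 hc
  exact hl (e c) <| by
    simpa [mapClusterPt_id_iff] using hc'.continuousAt_comp e.continuous.continuousAt

lemma isPreconnected_compl_union_image_of_mem (e : J ≃ₜ Y) {l : Filter Y} [l.NeBot]
    (hl : ∀ y, ¬ ClusterPt y l) {L : Set Y} (hL : IsPreconnected L) (hLl : L ∈ l)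
    (hJc : IsPreconnected Jᶜ) : IsPreconnected (Jᶜ ∪ (fun y ↦ (e.symm y : X)) '' L) := by
  obtain ⟨c, hcJ, hc⟩ := exists_mem_compl_mapClusterPt_of_homeomorph e l hl
  have hcL : c ∈ closure ((fun y ↦ (e.symm y : X)) '' L) :=
    ClusterPt.mem_closure_of_mem hc _ (image_mem_map hLl)
  have hLc : IsPreconnected ((fun y ↦ (e.symm y : X)) '' L ∪ {c}) :=
    (hL.image _ (continuous_subtype_val.comp e.symm.continuous).continuousOn).subset_closure
      subset_union_left (union_subset subset_closure (singleton_subset_iff.2 hcL))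
  have := IsPreconnected.union c hcJ (mem_union_right _ (mem_singleton c)) hJc hLc
  rwa [union_singleton, union_insert, insert_eq_of_mem (mem_union_left _ hcJ)] at this

section Ordered

variable [ConditionallyCompleteLinearOrder Y] [OrderTopology Y] [DenselyOrdered Y]

lemma isPreconnected_compl_union_image_of_isLowerSet [NoMinOrder Y] (e : J ≃ₜ Y) {L : Set Y}
    (hL : IsLowerSet L) (hJc : IsPreconnected Jᶜ) :
    IsPreconnected (Jᶜ ∪ (fun y ↦ (e.symm y : X)) '' L) := by
  rcases L.eq_empty_or_nonempty with rfl | ⟨a, ha⟩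
  · simpa using hJc
  exact isPreconnected_compl_union_image_of_mem e (fun y h ↦ h.ne (nhds_inf_atBot y))
    hL.ordConnected.isPreconnected (mem_atBot_sets.2 ⟨a, fun _ hb ↦ hL hb ha⟩) hJc

lemma isPreconnected_compl_union_image_of_isUpperSet [NoMaxOrder Y] (e : J ≃ₜ Y) {L : Set Y}
    (hL : IsUpperSet L) (hJc : IsPreconnected Jᶜ) :
    IsPreconnected (Jᶜ ∪ (fun y ↦ (e.symm y : X)) '' L) := by
  rcases L.eq_empty_or_nonempty with rfl | ⟨a, ha⟩
  · simpa using hJc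
  exact isPreconnected_compl_union_image_of_mem e (fun y h ↦ h.ne (nhds_inf_atTop y))
    hL.ordConnected.isPreconnected (mem_atTop_sets.2 ⟨a, fun _ hb ↦ hL hb ha⟩) hJc

end Ordered

end FreeInterval

theorem stmt16_general {X : Type*} [TopologicalSpace X] [CompactSpace X]
    (J : Set X) (e : ↥J ≃ₜ ℝ)
    (K : Set X) (hKJ : K ⊆ J)
    (hKint : (e '' {x : ↥J | (x : X) ∈ K}).OrdConnected)
    (hKdisc : ¬ IsPreconnected (Kᶜ : Set X)) :
    ¬ IsPreconnected (Jᶜ : Set X) := by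
  intro hJc
  apply hKdisc
  set φ : ℝ → X := fun t ↦ (e.symm t : X)
  have hS : e '' {x : J | (x : X) ∈ K} = φ ⁻¹' K := e.image_eq_preimage_symm _
  have hK : Kᶜ = Jᶜ ∪ φ '' (φ ⁻¹' K)ᶜ := by
    rw [image_compl_preimage, range_comp', e.symm.range_coe, image_univ, Subtype.range_coe]
    ext x
    have := @hKJ x
    simp only [mem_compl_iff, mem_union, Set.mem_sdiff]
    tauto
  rw [hS] at hKint
  obtain ⟨p, hp⟩ := compl_nonempty_of_homeomorph e
  rw [hK, hKint.compl_eq_union, image_union, union_union_distrib_left]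
  refine IsPreconnected.union p (Or.inl hp) (Or.inl hp) ?_ ?_
  · exact isPreconnected_compl_union_image_of_isLowerSet e
      (fun _ _ hba ha s hs ↦ hba.trans_lt (ha s hs)) hJc
  · exact isPreconnected_compl_union_image_of_isUpperSet e
      (fun _ _ hab ha s hs ↦ (ha s hs).trans_le hab) hJc

/-- If `X` is a connected compact Hausdorff space and `J` a free interval
(identified with ℝ through a homeomorphism `e`) containing a subinterval `K` such that
`X \ K` is disconnected, then `X \ J` is disconnected. -/
theorem stmt16 {X : Type*} [TopologicalSpace X] [CompactSpace X] [ConnectedSpace X]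
    [T2Space X] (J : Set X) (hJopen : IsOpen J) (e : ↥J ≃ₜ ℝ)
    (K : Set X) (hKJ : K ⊆ J) (hKne : K.Nonempty)
    (hKint : (e '' {x : ↥J | (x : X) ∈ K}).OrdConnected)
    (hKdisc : ¬ IsPreconnected (Kᶜ : Set X)) :
    ¬ IsPreconnected (Jᶜ : Set X) :=
  stmt16_general J e K hKJ hKint hKdisc
end

section
/- Let X be a compact Hausdorff space and f : X → X a continuous map. Suppose there is a nonempty open set G ⊆ X with f(G) ⊆ f(X \ G). Then the dynamical system (X, f) is not minimal, i.e. there exists a point x ∈ X whose forward orbit {f^n(x) : n ≥ 0} is not dense in X. -/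
/-!
If every forward orbit were dense, `f` would be onto (its range is closed and contains a dense
orbit), so `f(Gᶜ) = X` and every point of the closed set `Gᶜ` has a preimage in `Gᶜ`.
By compactness some point then has its whole forward orbit in `Gᶜ`, and that orbit misses the
nonempty open set `G`.
-/

open Set Function

section

variable {X : Type*} [TopologicalSpace X] {f : X → X}

theorem surjective_of_dense_orbit_of_image [CompactSpace X] [T2Space X] (hf : Continuous f)
    (x : X) (hx : Dense (range fun n : ℕ => f^[n] (f x))) : Surjective f := by
  have horbit : (range fun n : ℕ => f^[n] (f x)) ⊆ range f := by
    rintro _ ⟨n, rfl⟩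
    exact ⟨f^[n] x, by rw [← iterate_succ_apply' f, iterate_succ_apply]⟩
  have hclosed : IsClosed (range f) := (isCompact_range hf).isClosed
  exact range_eq_univ.mp <|
    eq_univ_of_univ_subset (hx.closure_eq ▸ hclosed.closure_subset_iff.mpr horbit)

private def iterateStaysIn (f : X → X) (K : Set X) (n : ℕ) : Set X :=
  ⋂ i ≤ n, f^[i] ⁻¹' K

theorem exists_forall_iterate_mem_of_subset_image [CompactSpace X] (hf : Continuous f)
    {K : Set X} (hK : IsClosed K) (hne : K.Nonempty) (hKf : K ⊆ f '' K) :
    ∃ x, ∀ n, f^[n] x ∈ K := by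
  set S := iterateStaysIn f K
  have hclosed : ∀ n, IsClosed (S n) := fun n =>
    isClosed_biInter fun i _ => hK.preimage (hf.iterate i)
  have hanti : ∀ n, S (n + 1) ⊆ S n := fun n =>
    biInter_subset_biInter_left fun i hi => Nat.le_succ_of_le hi
  have hSne : ∀ n, (S n).Nonempty := by
    intro n
    induction n with
    | zero => simpa [S, iterateStaysIn] using hne
    | succ n ih =>
      obtain ⟨y, hy⟩ := ih
      obtain ⟨z, hzK, rfl⟩ := hKf (mem_iInter₂.mp hy 0 n.zero_le)
      refine ⟨z, mem_iInter₂.mpr fun i hi => ?_⟩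
      cases i with
      | zero => exact hzK
      | succ i => exact mem_iInter₂.mp hy i (Nat.le_of_succ_le_succ hi)
  obtain ⟨x, hx⟩ := IsCompact.nonempty_iInter_of_sequence_nonempty_isCompact_isClosed
    S hanti hSne (hclosed 0).isCompact hclosed
  exact ⟨x, fun n => mem_iInter₂.mp (mem_iInter.mp hx n) n le_rfl⟩

end

/-- On a compact Hausdorff space, a continuous map admitting a redundant
open set (a nonempty open `G` with `f(G) ⊆ f(X \ G)`) is not minimal: some forward orbit
is not dense. -/
theorem stmt18 {X : Type*} [TopologicalSpace X] [CompactSpace X] [T2Space X]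
    (f : X → X) (hf : Continuous f) (G : Set X) (hGne : G.Nonempty) (hGopen : IsOpen G)
    (hred : f '' G ⊆ f '' Gᶜ) :
    ∃ x : X, ¬ Dense (Set.range fun n : ℕ => f^[n] x) := by
  by_contra! hdense
  obtain ⟨g, hg⟩ := hGne
  have hsurj := surjective_of_dense_orbit_of_image hf g (hdense (f g))
  have hGc : Gᶜ ⊆ f '' Gᶜ := by
    intro y _
    obtain ⟨z, rfl⟩ := hsurj y
    by_cases hz : z ∈ G
    · exact hred ⟨z, hz, rfl⟩
    · exact ⟨z, hz, rfl⟩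
  obtain ⟨z, hz, -⟩ := hred ⟨g, hg, rfl⟩
  obtain ⟨x, hx⟩ :=
    exists_forall_iterate_mem_of_subset_image hf hGopen.isClosed_compl ⟨z, hz⟩ hGc
  obtain ⟨_, ⟨n, rfl⟩, hn⟩ := (hdense x).exists_mem_open hGopen ⟨g, hg⟩
  exact hx n hn
end

section
/- Let X be a connected topological space in which there is a subset C, homeomorphic to a closed real interval [x₁, x₃] via an embedding with image lying in a free interval J of X, whose three points x₁ ≺ x₂ ≺ x₃ lie in J; then any connected subset D of X containing x₁, x₂, x₃ must contain the subarc [x₁, x₂] of J or the subarc [x₂, x₃] of J. -/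
/-!
If `D` missed a point `p` of `[x₁, x₂]` and a point `q` of `[x₂, x₃]`, then `D` would meet the
open arc `(p, q)` (at `x₂`) without meeting its endpoints. The open arc is open in `X`, and its
closure lies in the compact, hence closed, arc `[p, q]`, so it is relatively clopen in `D`.
Connectedness would force `D ⊆ (p, q)`, contradicting `x₁ ∈ D`.
-/

open Set

section FreeInterval

variable {X α : Type*} [TopologicalSpace X] [LinearOrder α] [TopologicalSpace α]
  {J : Set X} (e : J ≃ₜ α)

theorem isOpen_image_val_preimage_Ioo [OrderTopology α] (hJ : IsOpen J) (a b : α) :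
    IsOpen (Subtype.val '' (e ⁻¹' Ioo a b)) :=
  hJ.isOpenMap_subtype_val _ (isOpen_Ioo.preimage e.continuous)

theorem isCompact_image_val_preimage_Icc [CompactIccSpace α] (a b : α) :
    IsCompact (Subtype.val '' (e ⁻¹' Icc a b)) :=
  (e.isCompact_preimage.mpr isCompact_Icc).image continuous_subtype_val

theorem IsPreconnected.subset_image_val_preimage_Ioo [OrderTopology α] [CompactIccSpace α]
    [T2Space X] (hJ : IsOpen J) {D : Set X} (hD : IsPreconnected D) {p q : J}
    (hp : (p : X) ∉ D) (hq : (q : X) ∉ D)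
    (hDpq : (D ∩ Subtype.val '' (e ⁻¹' Ioo (e p) (e q))).Nonempty) :
    D ⊆ Subtype.val '' (e ⁻¹' Ioo (e p) (e q)) := by
  refine hD.subset_of_closure_inter_subset (isOpen_image_val_preimage_Ioo e hJ _ _) hDpq ?_
  rintro _ ⟨hcl, hzD⟩
  have hclosure : closure (Subtype.val '' (e ⁻¹' Ioo (e p) (e q))) ⊆
      Subtype.val '' (e ⁻¹' Icc (e p) (e q)) :=
    closure_minimal (image_mono (preimage_mono Ioo_subset_Icc_self))
      (isCompact_image_val_preimage_Icc e _ _).isClosed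
  obtain ⟨z, ⟨hpz, hzq⟩, rfl⟩ := hclosure hcl
  have hpz' : e p ≠ e z := fun h => hp (e.injective h ▸ hzD)
  have hzq' : e z ≠ e q := fun h => hq (e.injective h ▸ hzD)
  exact ⟨z, ⟨hpz.lt_of_ne hpz', hzq.lt_of_ne hzq'⟩, rfl⟩

end FreeInterval

theorem stmt19_general {X : Type*} [TopologicalSpace X] [T2Space X]
    (J : Set X) (hJopen : IsOpen J) (e : ↥J ≃ₜ ℝ)
    (x₁ x₂ x₃ : ↥J)
    (D : Set X) (hD : IsConnected D)
    (h1 : (x₁ : X) ∈ D) (h2 : (x₂ : X) ∈ D) :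
    (Subtype.val '' {z : ↥J | e x₁ ≤ e z ∧ e z ≤ e x₂} ⊆ D) ∨
      (Subtype.val '' {z : ↥J | e x₂ ≤ e z ∧ e z ≤ e x₃} ⊆ D) := by
  by_contra! hneither
  obtain ⟨⟨_, ⟨p, hp, rfl⟩, hpD⟩, ⟨_, ⟨q, hq, rfl⟩, hqD⟩⟩ :=
    And.imp not_subset.mp not_subset.mp hneither
  have hpx₂ : e p < e x₂ := hp.2.lt_of_ne fun h => hpD (e.injective h ▸ h2)
  have hx₂q : e x₂ < e q := hq.1.lt_of_ne fun h => hqD (e.injective h.symm ▸ h2)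
  have hDpq := hD.isPreconnected.subset_image_val_preimage_Ioo e hJopen hpD hqD
    ⟨x₂, h2, x₂, ⟨hpx₂, hx₂q⟩, rfl⟩
  obtain ⟨z, hz, hzx₁⟩ := hDpq h1
  cases Subtype.val_injective hzx₁
  exact hz.1.not_ge hp.1

/-- assertion (A): Let `X` be a connected Hausdorff space with a free
interval `J` (identifying homeomorphism `e : J ≃ₜ ℝ`), and let `x₁ ≺ x₂ ≺ x₃` be three
points of `J` (so that the subarc `[x₁, x₃]` of `J` is an embedded closed interval of
`X` lying in `J`). Then every connected subset `D` of `X` containing `x₁, x₂, x₃`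
contains the subarc `[x₁, x₂]` of `J` or the subarc `[x₂, x₃]` of `J`. -/
theorem stmt19 {X : Type*} [TopologicalSpace X] [ConnectedSpace X] [T2Space X]
    (J : Set X) (hJopen : IsOpen J) (e : ↥J ≃ₜ ℝ)
    (x₁ x₂ x₃ : ↥J) (h12 : e x₁ < e x₂) (h23 : e x₂ < e x₃)
    (D : Set X) (hD : IsConnected D)
    (h1 : (x₁ : X) ∈ D) (h2 : (x₂ : X) ∈ D) (h3 : (x₃ : X) ∈ D) :
    (Subtype.val '' {z : ↥J | e x₁ ≤ e z ∧ e z ≤ e x₂} ⊆ D) ∨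
      (Subtype.val '' {z : ↥J | e x₂ ≤ e z ∧ e z ≤ e x₃} ⊆ D) :=
  stmt19_general J hJopen e x₁ x₂ x₃ D hD h1 h2
end
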